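/- arXiv:1508.01930 — 6 statements merged into one kernel-verified Lean document; each statement's English description precedes it below -/
import Mathlib

section
/- Let X be a Banach space, Y a normed space, F : X ⇉ Y a closed set-valued map (gph F closed), (x̄,ȳ) ∈ gph F, (u,v) ∈ X×Y and γ ∈ (0,1]. Then F is directionally metrically γ-regular at (x̄,ȳ) in direction (u,v) with modulus τ > 0 if and only if there exist reals τ, δ > 0 such that d(x, F⁻¹(y)) ≤ τ φ(x,y)^γ for all (x,y) ∈ B((x̄,ȳ), δ) ∩ ((x̄,ȳ) + cone B((u,v), δ)) with d(y, F(x)) ≤ δ ‖(x,y) − (x̄,ȳ)‖^{1/γ}, where φ(x,y) := liminf_{u'→x} d(y, F(u')) is the lower semicontinuous envelope of (x,y) ↦ d(y, F(x)). -/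
open Filter Metric Set Topology
open scoped ENNReal NNReal

noncomputable section

/-- The conic hull `⋃ λ ≥ 0, λ • B((u,v), ε)` of the open ball of radius `ε` around `(u, v)`
in `X × Y`, where `X × Y` carries the sum norm `‖(x,y)‖ = ‖x‖ + ‖y‖`. -/
def coneBall2 {X Y : Type*} [NormedAddCommGroup X] [NormedSpace ℝ X]
    [NormedAddCommGroup Y] [NormedSpace ℝ Y] (u : X) (v : Y) (ε : ℝ) : Set (X × Y) :=
  {p | ∃ lam : ℝ, 0 ≤ lam ∧ ∃ w : X, ∃ z : Y, ‖w - u‖ + ‖z - v‖ < ε ∧ p = (lam • w, lam • z)}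

/-- `F` is directionally metrically `γ`-regular at `(xbar, ybar)` in direction `(u, v)`
with modulus `τ`: there are `δ, ε, η > 0` such that `d(x, F⁻¹(y)) ≤ τ d(y, F(x))^γ`
for all `(x,y) ∈ B((xbar,ybar), δ)` with `(x,y) ∈ (xbar,ybar) + cone B((u,v), ε)` and
`d(y,F(x)) ≤ η ‖(x,y)-(xbar,ybar)‖^(1/γ)`.  Distances to sets are extended-real valued
(equal to `+∞` for the empty set). -/
def DirHolderRegular {X Y : Type*} [NormedAddCommGroup X] [NormedSpace ℝ X]
    [NormedAddCommGroup Y] [NormedSpace ℝ Y]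
    (F : X → Set Y) (xbar : X) (ybar : Y) (u : X) (v : Y) (γ τ : ℝ) : Prop :=
  ∃ δ > (0:ℝ), ∃ ε > (0:ℝ), ∃ η > (0:ℝ), ∀ x : X, ∀ y : Y,
    ‖x - xbar‖ + ‖y - ybar‖ < δ →
    (x - xbar, y - ybar) ∈ coneBall2 u v ε →
    EMetric.infEdist y (F x) ≤ ENNReal.ofReal (η * (‖x - xbar‖ + ‖y - ybar‖) ^ (1/γ)) →
    EMetric.infEdist x {x' : X | y ∈ F x'} ≤ ENNReal.ofReal τ * EMetric.infEdist y (F x) ^ γ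

/-- The lower semicontinuous envelope `φ(x,y) = liminf_{x' → x} d(y, F(x'))`. -/
def lscEnv {X Y : Type*} [NormedAddCommGroup X] [NormedSpace ℝ X] [NormedAddCommGroup Y]
    (F : X → Set Y) (x : X) (y : Y) : ℝ≥0∞ :=
  Filter.liminf (fun x' : X => EMetric.infEdist y (F x')) (𝓝 x)

/-! `φ ≤ d(y, F(·))` gives one implication at once. For the other, at a point `(x, y)` of a
smaller region the liminf `φ(x, y)` is approached along points `x' → x`. These stay in the region
where the regularity estimate holds: the cone is open away from its vertex, and the distance
condition survives because `φ(x, y)` is small compared with `‖(x, y) - (x̄, ȳ)‖^(1/γ)`. Since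
`d(·, F⁻¹(y))` is continuous, the estimate at the points `x'` passes to `x`. -/

section Cone

variable {X Y : Type*} [NormedAddCommGroup X] [NormedSpace ℝ X]
  [NormedAddCommGroup Y] [NormedSpace ℝ Y]

lemma coneBall2_mono (u : X) (v : Y) {ε ε' : ℝ} (h : ε ≤ ε') :
    coneBall2 u v ε ⊆ coneBall2 u v ε' := by
  rintro p ⟨lam, hlam, w, z, hwz, rfl⟩
  exact ⟨lam, hlam, w, z, hwz.trans_le h, rfl⟩

/-- Near `p = λ • q` with `λ > 0` the cone contains the open set `λ • B((u,v), ε)`. -/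
lemma coneBall2_mem_nhds {u : X} {v : Y} {ε : ℝ} {p : X × Y} (hp : p ∈ coneBall2 u v ε)
    (hp0 : p ≠ 0) : coneBall2 u v ε ∈ 𝓝 p := by
  obtain ⟨lam, hlam, w, z, hwz, rfl⟩ := hp
  have hlam0 : lam ≠ 0 := by
    rintro rfl
    simp at hp0
  set B : Set (X × Y) := {q | ‖q.1 - u‖ + ‖q.2 - v‖ < ε}
  have hB : IsOpen B := isOpen_lt (by fun_prop) continuous_const
  refine Filter.mem_of_superset ((hB.smul₀ hlam0).mem_nhds (smul_mem_smul_set (a := lam)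
    (show (w, z) ∈ B from hwz))) ?_
  rintro _ ⟨q, hq, rfl⟩
  exact ⟨lam, hlam, q.1, q.2, hq, rfl⟩

lemma eventually_sub_mem_coneBall2 {u : X} {v : Y} {ε : ℝ} {xbar x : X} {ybar y : Y}
    (hp : (x - xbar, y - ybar) ∈ coneBall2 u v ε) (hp0 : (x - xbar, y - ybar) ≠ 0) :
    ∀ᶠ x' in 𝓝 x, (x' - xbar, y - ybar) ∈ coneBall2 u v ε :=
  ((continuous_id.sub continuous_const).prodMk continuous_const).tendsto x
    |>.eventually (coneBall2_mem_nhds hp hp0)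

end Cone

lemma lscEnv_le_infEDist {X Y : Type*} [NormedAddCommGroup X] [NormedSpace ℝ X]
    [NormedAddCommGroup Y] (F : X → Set Y) (x : X) (y : Y) :
    lscEnv F x y ≤ infEDist y (F x) := by
  refine liminf_le_of_frequently_le (Frequently.filter_mono ?_ (pure_le_nhds x))
  exact frequently_pure.2 le_rfl

lemma le_of_forall_lt_of_continuousAt {α β : Type*} [TopologicalSpace α] [LinearOrder α]
    [OrderTopology α] [DenselyOrdered α] [TopologicalSpace β] [Preorder β] [ClosedIciTopology β]
    {h : α → β} {a b : α} {z : β}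
    (hh : ContinuousAt h a) (hab : a < b) (hz : ∀ c, a < c → c < b → z ≤ h c) : z ≤ h a := by
  have : (𝓝[>] a).NeBot := nhdsGT_neBot_of_exists_gt ⟨b, hab⟩
  exact ge_of_tendsto (hh.tendsto.mono_left nhdsWithin_le_nhds)
    (Filter.mem_of_superset (Ioo_mem_nhdsGT hab) fun c hc => hz c hc.1 hc.2)

section Regularity

variable {X Y : Type*} [NormedAddCommGroup X] [NormedSpace ℝ X]
  [NormedAddCommGroup Y] [NormedSpace ℝ Y] {F : X → Set Y} {xbar : X} {ybar : Y} {u : X} {v : Y}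
  {γ τ : ℝ}

lemma dirHolderRegular_of_le_lscEnv (hγ : 0 < γ) {δ : ℝ} (hδ : 0 < δ)
    (H : ∀ x : X, ∀ y : Y, ‖x - xbar‖ + ‖y - ybar‖ < δ → (x - xbar, y - ybar) ∈ coneBall2 u v δ →
      infEDist y (F x) ≤ ENNReal.ofReal (δ * (‖x - xbar‖ + ‖y - ybar‖) ^ (1/γ)) →
      infEDist x {x' : X | y ∈ F x'} ≤ ENNReal.ofReal τ * lscEnv F x y ^ γ) :
    DirHolderRegular F xbar ybar u v γ τ :=
  ⟨δ, hδ, δ, hδ, δ, hδ, fun x y hball hcone hdist => (H x y hball hcone hdist).trans <|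
    mul_le_mul_right (ENNReal.rpow_le_rpow (lscEnv_le_infEDist F x y) hγ.le) _⟩

lemma infEDist_le_mul_lscEnv_rpow {δ ε η : ℝ} {x : X} {y : Y} (hγ : 0 < γ) (hη : 0 ≤ η)
    (H : ∀ x' : X, ‖x' - xbar‖ + ‖y - ybar‖ < δ → (x' - xbar, y - ybar) ∈ coneBall2 u v ε →
      infEDist y (F x') ≤ ENNReal.ofReal (η * (‖x' - xbar‖ + ‖y - ybar‖) ^ (1/γ)) →
      infEDist x' {x'' : X | y ∈ F x''} ≤ ENNReal.ofReal τ * infEDist y (F x') ^ γ)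
    (hs : 0 < ‖x - xbar‖ + ‖y - ybar‖) (hball : ‖x - xbar‖ + ‖y - ybar‖ < δ)
    (hcone : (x - xbar, y - ybar) ∈ coneBall2 u v ε)
    (hφ : lscEnv F x y < ENNReal.ofReal (η * ((‖x - xbar‖ + ‖y - ybar‖) / 2) ^ (1/γ))) :
    infEDist x {x' : X | y ∈ F x'} ≤ ENNReal.ofReal τ * lscEnv F x y ^ γ := by
  set s := ‖x - xbar‖ + ‖y - ybar‖
  have hcont : ContinuousAt (fun c : ℝ≥0∞ => ENNReal.ofReal τ * c ^ γ) (lscEnv F x y) :=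
    ENNReal.Tendsto.const_mul (ENNReal.continuous_rpow_const.tendsto _)
      (Or.inr ENNReal.ofReal_ne_top)
  refine le_of_forall_lt_of_continuousAt (h := fun c => ENNReal.ofReal τ * c ^ γ) hcont hφ
    fun c hφc hcη => ?_
  have hnorm : Tendsto (fun x' => ‖x' - xbar‖ + ‖y - ybar‖) (𝓝 x) (𝓝 s) :=
    ((continuous_id.sub continuous_const).norm.add continuous_const).tendsto x
  have hp0 : (x - xbar, y - ybar) ≠ 0 := by
    intro h
    simp only [Prod.mk_eq_zero, sub_eq_zero] at h
    simp [s, h.1, h.2] at hs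
  have hnear := ((hnorm.eventually_lt_const hball).and (hnorm.eventually_const_lt
    (half_lt_self hs))).and (eventually_sub_mem_coneBall2 hcone hp0)
  have hfreq : ∃ᶠ x' in 𝓝 x, infEDist x' {x'' | y ∈ F x''} ≤ ENNReal.ofReal τ * c ^ γ := by
    refine ((frequently_lt_of_liminf_lt (by isBoundedDefault) hφc).and_eventually hnear).mono ?_
    rintro x' ⟨hdc, ⟨hball', hs'⟩, hcone'⟩
    refine (H x' hball' hcone' ?_).trans (mul_le_mul_right (ENNReal.rpow_le_rpow hdc.le hγ.le) _)
    refine (hdc.trans hcη).le.trans (ENNReal.ofReal_le_ofReal ?_)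
    gcongr
  exact (isClosed_le continuous_infEDist continuous_const).mem_of_frequently_of_tendsto hfreq
    tendsto_id

lemma DirHolderRegular.exists_le_lscEnv (H : DirHolderRegular F xbar ybar u v γ τ)
    (hxy : ybar ∈ F xbar) (hγ : 0 < γ) :
    ∃ δ > (0:ℝ), ∀ x : X, ∀ y : Y,
      ‖x - xbar‖ + ‖y - ybar‖ < δ → (x - xbar, y - ybar) ∈ coneBall2 u v δ →
      infEDist y (F x) ≤ ENNReal.ofReal (δ * (‖x - xbar‖ + ‖y - ybar‖) ^ (1/γ)) →
      infEDist x {x' : X | y ∈ F x'} ≤ ENNReal.ofReal τ * lscEnv F x y ^ γ := by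
  obtain ⟨δ, hδ, ε, hε, η, hη, H⟩ := H
  -- the last term gives `φ(x, y) < η (s/2)^(1/γ)`, leaving room to move `x` by up to `s/2`
  set δ' := min (min δ ε) (η / 2 ^ (1/γ) / 2)
  refine ⟨δ', by positivity, fun x y hball hcone hdist => ?_⟩
  set s := ‖x - xbar‖ + ‖y - ybar‖
  rcases le_or_gt s 0 with hs | hs
  · have hx : x = xbar := sub_eq_zero.1 (norm_le_zero_iff.1 (by linarith [norm_nonneg (y - ybar)]))
    have hy : y = ybar := sub_eq_zero.1 (norm_le_zero_iff.1 (by linarith [norm_nonneg (x - xbar)]))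
    subst hx hy
    simp [infEDist_zero_of_mem (show x ∈ {x' | y ∈ F x'} from hxy)]
  have hφ : lscEnv F x y < ENNReal.ofReal (η * (s / 2) ^ (1/γ)) := by
    refine (lscEnv_le_infEDist F x y).trans_lt (hdist.trans_lt ?_)
    rw [ENNReal.ofReal_lt_ofReal_iff (by positivity)]
    calc δ' * s ^ (1/γ) < η / 2 ^ (1/γ) * s ^ (1/γ) := by
          gcongr
          exact (min_le_right _ _).trans_lt (half_lt_self (by positivity))
      _ = η * (s / 2) ^ (1/γ) := by rw [Real.div_rpow hs.le zero_le_two]; ring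
  exact infEDist_le_mul_lscEnv_rpow hγ hη.le (H · y) hs
    (hball.trans_le ((min_le_left _ _).trans (min_le_left _ _)))
    (coneBall2_mono u v ((min_le_left _ _).trans (min_le_right _ _)) hcone) hφ

end Regularity

theorem dirHolderRegular_iff_lscEnv_general
    {X Y : Type*} [NormedAddCommGroup X] [NormedSpace ℝ X]
    [NormedAddCommGroup Y] [NormedSpace ℝ Y]
    (F : X → Set Y)
    (xbar : X) (ybar : Y) (hxy : ybar ∈ F xbar) (u : X) (v : Y)
    (γ : ℝ) (hγ0 : 0 < γ) :
    (∃ τ > (0:ℝ), DirHolderRegular F xbar ybar u v γ τ) ↔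
      ∃ τ > (0:ℝ), ∃ δ > (0:ℝ), ∀ x : X, ∀ y : Y,
        ‖x - xbar‖ + ‖y - ybar‖ < δ →
        (x - xbar, y - ybar) ∈ coneBall2 u v δ →
        EMetric.infEdist y (F x) ≤ ENNReal.ofReal (δ * (‖x - xbar‖ + ‖y - ybar‖) ^ (1/γ)) →
        EMetric.infEdist x {x' : X | y ∈ F x'} ≤
          ENNReal.ofReal τ * lscEnv F x y ^ γ := by
  constructor
  · rintro ⟨τ, hτ, H⟩
    exact ⟨τ, hτ, H.exists_le_lscEnv hxy hγ0⟩
  · rintro ⟨τ, hτ, δ, hδ, H⟩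
    exact ⟨τ, hτ, dirHolderRegular_of_le_lscEnv hγ0 hδ H⟩

/-- Lemma 1 of the paper: `F` is directionally metrically `γ`-regular at
`(xbar,ybar)` in direction `(u,v)` with some modulus `τ > 0` iff there are `τ, δ > 0` with
`d(x, F⁻¹(y)) ≤ τ φ(x,y)^γ` for all `(x,y) ∈ B((xbar,ybar),δ) ∩ ((xbar,ybar) + cone B((u,v),δ))`
with `d(y,F(x)) ≤ δ ‖(x,y) − (xbar,ybar)‖^(1/γ)`. -/
theorem dirHolderRegular_iff_lscEnv
    {X Y : Type*} [NormedAddCommGroup X] [NormedSpace ℝ X] [CompleteSpace X]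
    [NormedAddCommGroup Y] [NormedSpace ℝ Y]
    (F : X → Set Y) (hF : IsClosed {p : X × Y | p.2 ∈ F p.1})
    (xbar : X) (ybar : Y) (hxy : ybar ∈ F xbar) (u : X) (v : Y)
    (γ : ℝ) (hγ0 : 0 < γ) (hγ1 : γ ≤ 1) :
    (∃ τ > (0:ℝ), DirHolderRegular F xbar ybar u v γ τ) ↔
      ∃ τ > (0:ℝ), ∃ δ > (0:ℝ), ∀ x : X, ∀ y : Y,
        ‖x - xbar‖ + ‖y - ybar‖ < δ →
        (x - xbar, y - ybar) ∈ coneBall2 u v δ →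
        EMetric.infEdist y (F x) ≤ ENNReal.ofReal (δ * (‖x - xbar‖ + ‖y - ybar‖) ^ (1/γ)) →
        EMetric.infEdist x {x' : X | y ∈ F x'} ≤
          ENNReal.ofReal τ * lscEnv F x y ^ γ :=
  dirHolderRegular_iff_lscEnv_general F xbar ybar hxy u v γ hγ0

end
end

section
/- Let X be a normed space, u ∈ X, x̄ ∈ X, and let {xₙ} be a sequence in X with xₙ →_u x̄. Then for any sequence of nonnegative reals {δₙ} decreasing to 0 and any sequence {zₙ} ⊆ X with ‖zₙ − xₙ‖ ≤ δₙ ‖xₙ − x̄‖ for all n, one has zₙ →_u x̄. -/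
open Filter Metric Set Topology

/-- Directional convergence of a sequence: `s n →_u xbar` means `s n → xbar` and, when
`u ≠ 0`, for every `ε > 0` eventually either `s n = xbar` or the normalized difference
`(s n - xbar)/‖s n - xbar‖` is within `ε` of `u/‖u‖`. -/
def SeqDirTendsto {X : Type*} [NormedAddCommGroup X] [NormedSpace ℝ X]
    (s : ℕ → X) (u xbar : X) : Prop :=
  Tendsto s atTop (𝓝 xbar) ∧
    (u ≠ 0 → ∀ ε > (0:ℝ), ∀ᶠ n in atTop,
      s n = xbar ∨ ‖(‖s n - xbar‖)⁻¹ • (s n - xbar) - (‖u‖)⁻¹ • u‖ < ε)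

/-! The normalization `x ↦ ‖x‖⁻¹ • x` satisfies `‖x‖ * ‖normalize y - normalize x‖ ≤ 2 * ‖y - x‖`.
Applied to `x = sₙ - x̄` and `y = zₙ - x̄`, the hypothesis makes the directions of `sₙ - x̄` and
`zₙ - x̄` differ by at most `2 δₙ → 0`, while `‖zₙ - x̄‖ ≤ (1 + δₙ) ‖sₙ - x̄‖ → 0`. -/

open NormedSpace

section Normalize

variable {V : Type*} [NormedAddCommGroup V] [NormedSpace ℝ V]

lemma norm_normalize_le (x : V) : ‖normalize x‖ ≤ 1 := by
  rcases eq_or_ne x 0 with rfl | hx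
  · simp
  · exact (norm_normalize hx).le

lemma norm_mul_norm_normalize_sub_normalize_le (x y : V) :
    ‖x‖ * ‖normalize y - normalize x‖ ≤ 2 * ‖y - x‖ := by
  have hdecomp :
      ‖x‖ • (normalize y - normalize x) = (‖x‖ - ‖y‖) • normalize y + (y - x) := by
    rw [smul_sub, sub_smul, norm_smul_normalize, norm_smul_normalize]
    abel
  calc ‖x‖ * ‖normalize y - normalize x‖
      = ‖(‖x‖ - ‖y‖) • normalize y + (y - x)‖ := by
        rw [← hdecomp, norm_smul, norm_norm]
    _ ≤ |‖x‖ - ‖y‖| * ‖normalize y‖ + ‖y - x‖ := by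
        simpa only [norm_smul, Real.norm_eq_abs] using
          norm_add_le ((‖x‖ - ‖y‖) • normalize y) (y - x)
    _ ≤ ‖y - x‖ * 1 + ‖y - x‖ := by
        gcongr
        · rw [abs_sub_comm]; exact abs_norm_sub_norm_le y x
        · exact norm_normalize_le y
    _ = 2 * ‖y - x‖ := by ring

lemma norm_normalize_sub_normalize_le_of_norm_sub_le {x y : V} {d : ℝ} (hx : x ≠ 0)
    (h : ‖y - x‖ ≤ d * ‖x‖) : ‖normalize y - normalize x‖ ≤ 2 * d := by
  have hx' : 0 < ‖x‖ := norm_pos_iff.mpr hx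
  have := norm_mul_norm_normalize_sub_normalize_le x y
  nlinarith

end Normalize

section Perturbation

variable {ι V : Type*} {l : Filter ι} {δ : ι → ℝ}

lemma tendsto_of_norm_sub_le_mul [SeminormedAddCommGroup V] {s z : ι → V} {x : V}
    (hs : Tendsto s l (𝓝 x)) (hδ : Tendsto δ l (𝓝 0))
    (hz : ∀ n, ‖z n - s n‖ ≤ δ n * ‖s n - x‖) : Tendsto z l (𝓝 x) := by
  rw [tendsto_iff_norm_sub_tendsto_zero] at hs ⊢
  refine squeeze_zero (fun n => norm_nonneg _) (g := fun n => (1 + δ n) * ‖s n - x‖)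
    (fun n => ?_) (by simpa using (tendsto_const_nhds.add hδ).mul hs)
  calc ‖z n - x‖ ≤ ‖z n - s n‖ + ‖s n - x‖ := norm_sub_le_norm_sub_add_norm_sub _ _ _
    _ ≤ (1 + δ n) * ‖s n - x‖ := by linarith [hz n]

lemma eventually_eq_or_norm_normalize_sub_lt [NormedAddCommGroup V] [NormedSpace ℝ V]
    {s z : ι → V} {x w : V} {ε ε' : ℝ}
    (hs : ∀ᶠ n in l, s n = x ∨ ‖normalize (s n - x) - w‖ < ε)
    (hδ : Tendsto δ l (𝓝 0)) (hz : ∀ n, ‖z n - s n‖ ≤ δ n * ‖s n - x‖) (hεε' : ε < ε') :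
    ∀ᶠ n in l, z n = x ∨ ‖normalize (z n - x) - w‖ < ε' := by
  have hδsmall : ∀ᶠ n in l, 2 * δ n < ε' - ε := by
    have : ∀ᶠ n in l, δ n < (ε' - ε) / 2 := hδ.eventually (gt_mem_nhds (by linarith))
    filter_upwards [this] with n hn
    linarith
  filter_upwards [hs, hδsmall] with n hsn hδn
  by_cases hsx : s n = x
  · left
    simpa [hsx, sub_eq_zero] using hz n
  right
  replace hsn := hsn.resolve_left hsx
  have hdir : ‖normalize (z n - x) - normalize (s n - x)‖ ≤ 2 * δ n :=
    norm_normalize_sub_normalize_le_of_norm_sub_le (sub_ne_zero.mpr hsx)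
      (by simpa using hz n)
  calc ‖normalize (z n - x) - w‖
      ≤ ‖normalize (z n - x) - normalize (s n - x)‖ + ‖normalize (s n - x) - w‖ :=
        norm_sub_le_norm_sub_add_norm_sub _ _ _
    _ < ε' := by linarith

end Perturbation

theorem seqDirTendsto_of_perturbation_general
    {X : Type*} [NormedAddCommGroup X] [NormedSpace ℝ X]
    (s z : ℕ → X) (u xbar : X) (δ : ℕ → ℝ)
    (hs : SeqDirTendsto s u xbar)
    (hδlim : Tendsto δ atTop (𝓝 0))
    (hz : ∀ n, ‖z n - s n‖ ≤ δ n * ‖s n - xbar‖) :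
    SeqDirTendsto z u xbar :=
  ⟨tendsto_of_norm_sub_le_mul hs.1 hδlim hz, fun hu ε hε =>
    eventually_eq_or_norm_normalize_sub_lt (hs.2 hu (ε / 2) (half_pos hε)) hδlim hz
      (half_lt_self hε)⟩

/-- Lemma 2 of the paper: if `xₙ →_u x̄`, `δₙ ≥ 0` decreases to `0`
and `‖zₙ − xₙ‖ ≤ δₙ ‖xₙ − x̄‖` for all `n`, then `zₙ →_u x̄`. -/
theorem seqDirTendsto_of_perturbation
    {X : Type*} [NormedAddCommGroup X] [NormedSpace ℝ X]
    (s z : ℕ → X) (u xbar : X) (δ : ℕ → ℝ)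
    (hs : SeqDirTendsto s u xbar)
    (hδ0 : ∀ n, 0 ≤ δ n) (hδanti : Antitone δ) (hδlim : Tendsto δ atTop (𝓝 0))
    (hz : ∀ n, ‖z n - s n‖ ≤ δ n * ‖s n - xbar‖) :
    SeqDirTendsto z u xbar :=
  seqDirTendsto_of_perturbation_general s z u xbar δ hs hδlim hz
end

section
/- Let X be a normed space, {xₙ} ⊆ X a sequence, u ∈ X and x̄ ∈ X. The following are equivalent: (C₁) xₙ →_u x̄; (C₂) xₙ → x̄ and there is a sequence of nonnegative reals {δₙ} → 0 such that xₙ ∈ x̄ + cone B(u, δₙ) for all n ∈ ℕ. -/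
open Filter Metric Set Topology

/-- The conic hull `⋃ λ ≥ 0, λ • B(u, ε)` of the open ball of radius `ε` around `u`. -/
def coneBall {X : Type*} [NormedAddCommGroup X] [NormedSpace ℝ X] (u : X) (ε : ℝ) :
    Set X :=
  {x | ∃ lam : ℝ, 0 ≤ lam ∧ ∃ w : X, ‖w - u‖ < ε ∧ x = lam • w}

/-!
For `u ≠ 0` and `y ≠ 0`, membership `y ∈ cone B(u, δ)` is governed by `d = ‖u‖ · ‖y/‖y‖ - u/‖u‖‖`:
it holds as soon as `d < δ`, and it forces `d < 2δ`. So the angular deviations of `xₙ - x̄` tend to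
`0` exactly when admissible radii `δₙ` can be chosen tending to `0`. For `u = 0` every cone
`cone B(0, δ)` with `δ > 0` is the whole space.
-/

section

variable {X : Type*} [NormedAddCommGroup X] [NormedSpace ℝ X]

lemma norm_inv_norm_smul_sub_inv_norm_smul_le {u : X} (hu : u ≠ 0) (w : X) :
    ‖‖w‖⁻¹ • w - ‖u‖⁻¹ • u‖ ≤ 2 * ‖w - u‖ / ‖u‖ := by
  have hu' : 0 < ‖u‖ := norm_pos_iff.2 hu
  have hdecomp : ‖w‖⁻¹ • w - ‖u‖⁻¹ • u = ‖u‖⁻¹ • (w - u) + (‖w‖⁻¹ - ‖u‖⁻¹) • w := by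
    module
  have hcorr : ‖(‖w‖⁻¹ - ‖u‖⁻¹) • w‖ ≤ ‖w - u‖ / ‖u‖ := by
    obtain rfl | hw := eq_or_ne w 0
    · rw [smul_zero, norm_zero]; positivity
    have hw' : 0 < ‖w‖ := norm_pos_iff.2 hw
    have hcoef : (‖w‖⁻¹ - ‖u‖⁻¹) * ‖w‖ = (‖u‖ - ‖w‖) / ‖u‖ := by field_simp
    rw [norm_smul, Real.norm_eq_abs, ← abs_of_pos hw', ← abs_mul, abs_of_pos hw', hcoef,
      abs_div, abs_of_pos hu']
    gcongr
    exact (abs_norm_sub_norm_le u w).trans_eq (norm_sub_rev u w)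
  calc ‖‖w‖⁻¹ • w - ‖u‖⁻¹ • u‖
      ≤ ‖‖u‖⁻¹ • (w - u)‖ + ‖(‖w‖⁻¹ - ‖u‖⁻¹) • w‖ := hdecomp ▸ norm_add_le _ _
    _ ≤ ‖w - u‖ / ‖u‖ + ‖w - u‖ / ‖u‖ := by
        rw [norm_smul, norm_inv, norm_norm, inv_mul_eq_div]
        gcongr
    _ = 2 * ‖w - u‖ / ‖u‖ := by ring

lemma zero_mem_coneBall (u : X) {δ : ℝ} (hδ : 0 < δ) : (0 : X) ∈ coneBall u δ :=
  ⟨0, le_rfl, u, by rwa [sub_self, norm_zero], (zero_smul ℝ u).symm⟩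

lemma coneBall_zero {δ : ℝ} (hδ : 0 < δ) : coneBall (0 : X) δ = univ := by
  refine eq_univ_of_forall fun y => ?_
  obtain rfl | hy := eq_or_ne y 0
  · exact zero_mem_coneBall 0 hδ
  have hy' : 0 < ‖y‖ := norm_pos_iff.2 hy
  refine ⟨2 * ‖y‖ / δ, by positivity, (δ / (2 * ‖y‖)) • y, ?_, ?_⟩
  · rw [sub_zero, norm_smul, Real.norm_of_nonneg (by positivity)]
    field_simp
    linarith
  · rw [smul_smul, div_mul_div_comm, mul_comm, div_self (by positivity), one_smul]

lemma mem_coneBall_of_mul_norm_inv_norm_smul_sub_lt {u y : X} {δ : ℝ} (hu : u ≠ 0)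
    (h : ‖u‖ * ‖‖y‖⁻¹ • y - ‖u‖⁻¹ • u‖ < δ) : y ∈ coneBall u δ := by
  obtain rfl | hy := eq_or_ne y 0
  · exact zero_mem_coneBall u ((by positivity : (0 : ℝ) ≤ _).trans_lt h)
  have hu' : 0 < ‖u‖ := norm_pos_iff.2 hu
  have hy' : 0 < ‖y‖ := norm_pos_iff.2 hy
  refine ⟨‖y‖ / ‖u‖, by positivity, (‖u‖ / ‖y‖) • y, ?_, ?_⟩
  · have hw : (‖u‖ / ‖y‖) • y - u = ‖u‖ • (‖y‖⁻¹ • y - ‖u‖⁻¹ • u) := by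
      match_scalars <;> field_simp
    rwa [hw, norm_smul, norm_norm]
  · rw [smul_smul, div_mul_div_comm, mul_comm ‖y‖, div_self (by positivity), one_smul]

lemma norm_inv_norm_smul_sub_lt_of_mem_coneBall {u y : X} {δ : ℝ} (hu : u ≠ 0) (hy : y ≠ 0)
    (h : y ∈ coneBall u δ) : ‖‖y‖⁻¹ • y - ‖u‖⁻¹ • u‖ < 2 * δ / ‖u‖ := by
  obtain ⟨lam, hlam, w, hwu, rfl⟩ := h
  have hw : w ≠ 0 := by rintro rfl; exact hy (smul_zero lam)
  rw [(SameRay.sameRay_nonneg_smul_left w hlam).inv_norm_smul_eq hy hw]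
  calc ‖‖w‖⁻¹ • w - ‖u‖⁻¹ • u‖ ≤ 2 * ‖w - u‖ / ‖u‖ :=
        norm_inv_norm_smul_sub_inv_norm_smul_le hu w
    _ < 2 * δ / ‖u‖ := by
        have := norm_pos_iff.2 hu
        gcongr

lemma exists_tendsto_zero_forall_mem_coneBall (y : ℕ → X) (u : X)
    (h : u ≠ 0 → ∀ ε > (0 : ℝ), ∀ᶠ n in atTop, y n = 0 ∨ ‖‖y n‖⁻¹ • y n - ‖u‖⁻¹ • u‖ < ε) :
    ∃ δ : ℕ → ℝ, (∀ n, 0 ≤ δ n) ∧ Tendsto δ atTop (𝓝 0) ∧ ∀ n, y n ∈ coneBall u (δ n) := by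
  classical
  obtain rfl | hu := eq_or_ne u 0
  · refine ⟨fun n => 1 / (n + 1), fun n => by positivity,
      tendsto_one_div_add_atTop_nhds_zero_nat, fun n => ?_⟩
    rw [coneBall_zero (by positivity)]
    trivial
  set T : ℕ → ℝ := fun n => if y n = 0 then 0 else ‖‖y n‖⁻¹ • y n - ‖u‖⁻¹ • u‖ with hT
  have hT_nonneg : ∀ n, 0 ≤ T n := fun n => by
    simp only [hT]
    split_ifs
    exacts [le_rfl, norm_nonneg _]
  have hT_tendsto : Tendsto T atTop (𝓝 0) := by
    refine tendsto_order.2 ⟨fun a ha => Eventually.of_forall fun n => ha.trans_le (hT_nonneg n),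
      fun ε hε => (h hu ε hε).mono fun n hn => ?_⟩
    simp only [hT]
    split_ifs with hyn
    exacts [hε, hn.resolve_left hyn]
  refine ⟨fun n => ‖u‖ * T n + 1 / (n + 1), fun n => by have := hT_nonneg n; positivity,
    ?_, fun n => ?_⟩
  · simpa using (hT_tendsto.const_mul ‖u‖).add tendsto_one_div_add_atTop_nhds_zero_nat
  have hpos : (0 : ℝ) < 1 / (n + 1) := by positivity
  by_cases hyn : y n = 0
  · rw [hyn]
    exact zero_mem_coneBall u (by have := hT_nonneg n; positivity)
  refine mem_coneBall_of_mul_norm_inv_norm_smul_sub_lt hu ?_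
  simp only [hT, hyn, if_false]
  linarith

lemma eventually_inv_norm_smul_sub_lt_of_mem_coneBall {y : ℕ → X} {u : X} {δ : ℕ → ℝ}
    (hu : u ≠ 0) (hδ : Tendsto δ atTop (𝓝 0)) (hy : ∀ n, y n ∈ coneBall u (δ n)) :
    ∀ ε > (0 : ℝ), ∀ᶠ n in atTop, y n = 0 ∨ ‖‖y n‖⁻¹ • y n - ‖u‖⁻¹ • u‖ < ε := by
  intro ε hε
  have hu' : 0 < ‖u‖ := norm_pos_iff.2 hu
  filter_upwards [hδ.eventually (gt_mem_nhds (by positivity : 0 < ε * ‖u‖ / 2))] with n hn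
  refine or_iff_not_imp_left.2 fun hyn =>
    (norm_inv_norm_smul_sub_lt_of_mem_coneBall hu hyn (hy n)).trans_le ?_
  rw [div_le_iff₀ hu']
  linarith

lemma forall_eventually_inv_norm_smul_sub_lt_iff_exists_coneBall (y : ℕ → X) (u : X) :
    (u ≠ 0 → ∀ ε > (0 : ℝ), ∀ᶠ n in atTop, y n = 0 ∨ ‖‖y n‖⁻¹ • y n - ‖u‖⁻¹ • u‖ < ε) ↔
      ∃ δ : ℕ → ℝ, (∀ n, 0 ≤ δ n) ∧ Tendsto δ atTop (𝓝 0) ∧ ∀ n, y n ∈ coneBall u (δ n) :=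
  ⟨exists_tendsto_zero_forall_mem_coneBall y u, fun ⟨_, _, hδ, hy⟩ hu =>
    eventually_inv_norm_smul_sub_lt_of_mem_coneBall hu hδ hy⟩

end

/-- `xₙ →_u x̄` (C₁) iff `xₙ → x̄` and there is a sequence of nonnegative
reals `δₙ → 0` with `xₙ ∈ x̄ + cone B(u, δₙ)` for all `n` (C₂). -/
theorem seqDirTendsto_iff_coneBall
    {X : Type*} [NormedAddCommGroup X] [NormedSpace ℝ X]
    (s : ℕ → X) (u xbar : X) :
    SeqDirTendsto s u xbar ↔
      (Tendsto s atTop (𝓝 xbar) ∧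
        ∃ δ : ℕ → ℝ, (∀ n, 0 ≤ δ n) ∧ Tendsto δ atTop (𝓝 0) ∧
          ∀ n, s n - xbar ∈ coneBall u (δ n)) :=
  and_congr_right fun _ => by
    simpa only [sub_eq_zero] using
      forall_eventually_inv_norm_smul_sub_lt_iff_exists_coneBall (fun n => s n - xbar) u
end

section
/- Let F : ℝ² → ℝ be defined by F(x) = (x₁ − x₂)³ for x = (x₁,x₂), with ℝ² equipped with the Euclidean norm. Then: (a) for every x ∈ ℝ² and y ∈ ℝ, F⁻¹(y) = {(t + y^{1/3}, t) : t ∈ ℝ} and d(x, F⁻¹(y)) = |x₁ − x₂ − y^{1/3}|/√2 ≤ 2^{1/6} |y − F(x)|^{1/3}, so F is metrically 1/3-regular at (0,0) (in direction (0,0)); (b) nevertheless, for every x = (x₁,x₁) ∈ ℝ² and every y ∈ ℝ with y ≠ 0, the local slope |∇φ^{1/3}(·,y)|(x) = 0, where φ(x,y) = |y − F(x)|. In particular the local-slope condition is not necessary for directional metric γ-regularity when γ ∈ (0,1). -/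
/-!
Since `F(x) = (x₁ − x₂)³` depends only on `⟪(1, −1), x⟫ = x₁ − x₂`, the level set `F⁻¹(c³)` is
the line `x₁ − x₂ = c`, at distance `|x₁ − x₂ − c| / √2` from `x`; the elementary bound
`|u − c|³ ≤ 4 |u³ − c³|` turns this into the global `1/3`-regularity estimate with constant
`2^{1/6}`. On the diagonal, however, `F` vanishes to third order, `|F z − F x| ≤ 8 d(x,z)³`,
while the cube root is Lipschitz near `|y| > 0`; so `φ^{1/3}(·, y)` decreases by at most
`O(d(x,z)³)` near `x` and its local slope there is `0`.
-/

open Filter Metric Set Topology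
open scoped ENNReal NNReal Classical

noncomputable section

/-- The local slope `|∇f|(x)`: equal to `+∞` if `f x = +∞`, to `0` if `x` is a local
minimum of `f`, and otherwise to `limsup_{z → x, z ≠ x} (f(x) − f(z)) / d(x,z)`. -/
def localSlope {X : Type*} [PseudoEMetricSpace X] (f : X → ℝ≥0∞) (x : X) : ℝ≥0∞ :=
  if f x = ⊤ then ⊤
  else if ∀ᶠ z in 𝓝 x, f x ≤ f z then 0
  else Filter.limsup (fun z : X => (f x - f z) / edist x z) (𝓝[≠] x)

/-- The map `F(x) = (x₁ − x₂)³` on `ℝ²` with the Euclidean norm. -/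
def Fcub : EuclideanSpace ℝ (Fin 2) → ℝ := fun x => (x 0 - x 1) ^ 3

open scoped RealInnerProductSpace

lemma exists_pow_eq_of_odd {n : ℕ} (hn : Odd n) (y : ℝ) : ∃ c : ℝ, c ^ n = y := by
  have hn0 : n ≠ 0 := hn.pos.ne'
  rcases le_total 0 y with hy | hy
  · exact ⟨y ^ (n⁻¹ : ℝ), Real.rpow_inv_natCast_pow hy hn0⟩
  · refine ⟨-(-y) ^ (n⁻¹ : ℝ), ?_⟩
    rw [hn.neg_pow, Real.rpow_inv_natCast_pow (neg_nonneg.2 hy) hn0, neg_neg]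

lemma abs_sub_pow_three_le {R : Type*} [CommRing R] [LinearOrder R] [IsStrictOrderedRing R]
    (a b : R) : |a - b| ^ 3 ≤ 4 * |a ^ 3 - b ^ 3| := by
  have hq : (a - b) ^ 2 ≤ 4 * (a ^ 2 + a * b + b ^ 2) := by nlinarith [sq_nonneg (a + b)]
  have hfac : a ^ 3 - b ^ 3 = (a - b) * (a ^ 2 + a * b + b ^ 2) := by ring
  calc |a - b| ^ 3 = |a - b| * (a - b) ^ 2 := by rw [pow_succ', sq_abs]
    _ ≤ |a - b| * (4 * (a ^ 2 + a * b + b ^ 2)) := by gcongr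
    _ = 4 * |a ^ 3 - b ^ 3| := by
      have hQ : 0 ≤ a ^ 2 + a * b + b ^ 2 := by nlinarith [sq_nonneg (a - b)]
      rw [hfac, abs_mul, abs_of_nonneg hQ]
      ring

lemma rpow_one_div_three_pow_three {x : ℝ} (hx : 0 ≤ x) : (x ^ ((1:ℝ)/3)) ^ 3 = x := by
  simpa using Real.rpow_inv_natCast_pow hx three_ne_zero

lemma abs_sub_div_sqrt_two_le (a b : ℝ) :
    |a - b| / √2 ≤ (2:ℝ) ^ ((1:ℝ)/6) * |a ^ 3 - b ^ 3| ^ ((1:ℝ)/3) := by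
  rw [← pow_le_pow_iff_left₀ (by positivity) (by positivity) three_ne_zero, div_pow, mul_pow,
    rpow_one_div_three_pow_three (abs_nonneg _), ← Real.rpow_mul_natCast (by norm_num)]
  have hsqrt : √2 * √2 = 2 := Real.mul_self_sqrt zero_le_two
  rw [show (1:ℝ)/6 * (3:ℕ) = 1/2 by norm_num, ← Real.sqrt_eq_rpow, div_le_iff₀ (by positivity)]
  calc |a - b| ^ 3 ≤ 4 * |a ^ 3 - b ^ 3| := abs_sub_pow_three_le a b
    _ = √2 * |a ^ 3 - b ^ 3| * √2 ^ 3 := by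
      linear_combination (-(√2 * √2 + 2) * |a ^ 3 - b ^ 3|) * hsqrt

lemma rpow_one_div_three_sub_le {s r : ℝ} (hs : 0 < s) (hr : 0 ≤ r) :
    s ^ ((1:ℝ)/3) - r ^ ((1:ℝ)/3) ≤ |s - r| / s ^ ((2:ℝ)/3) := by
  have hA3 := rpow_one_div_three_pow_three hs.le
  have hB3 := rpow_one_div_three_pow_three hr
  have hA2 : s ^ ((2:ℝ)/3) = (s ^ ((1:ℝ)/3)) ^ 2 := by
    rw [← Real.rpow_mul_natCast hs.le]; norm_num
  set A := s ^ ((1:ℝ)/3)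
  set B := r ^ ((1:ℝ)/3)
  have hA : 0 < A := by positivity
  have hB : 0 ≤ B := by positivity
  rw [hA2, le_div_iff₀ (by positivity)]
  rcases le_total A B with hAB | hBA
  · nlinarith [abs_nonneg (s - r)]
  · rw [← hA3, ← hB3]
    nlinarith [le_abs_self (A ^ 3 - B ^ 3), mul_nonneg (sub_nonneg.2 hBA) (mul_nonneg hA.le hB),
      mul_nonneg (sub_nonneg.2 hBA) (sq_nonneg B)]

lemma infDist_setOf_inner_eq {E : Type*} [NormedAddCommGroup E] [InnerProductSpace ℝ E]
    {v : E} (hv : v ≠ 0) (c : ℝ) (x : E) :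
    infDist x {p | ⟪v, p⟫ = c} = |⟪v, x⟫ - c| / ‖v‖ := by
  have hv' : 0 < ‖v‖ := norm_pos_iff.2 hv
  set p₀ := x - ((⟪v, x⟫ - c) / ‖v‖ ^ 2) • v
  have hp₀ : p₀ ∈ {p | ⟪v, p⟫ = c} := by
    show ⟪v, p₀⟫ = c
    simp only [p₀, inner_sub_right, inner_smul_right, real_inner_self_eq_norm_sq]
    field_simp
    ring
  have hdist : dist x p₀ = |⟪v, x⟫ - c| / ‖v‖ := by
    rw [dist_eq_norm, sub_sub_cancel, norm_smul, Real.norm_eq_abs, abs_div,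
      abs_of_pos (by positivity : 0 < ‖v‖ ^ 2)]
    field_simp
  refine le_antisymm (hdist ▸ infDist_le_dist_of_mem hp₀)
    ((le_infDist ⟨p₀, hp₀⟩).2 fun p hp => ?_)
  have hp : ⟪v, p⟫ = c := hp
  rw [div_le_iff₀ hv', dist_eq_norm, ← hp, ← inner_sub_right, mul_comm]
  exact abs_real_inner_le_norm v (x - p)

lemma localSlope_eq_zero_of_le_mul {X : Type*} [PseudoEMetricSpace X] {f : X → ℝ≥0∞} {x : X}
    (hfx : f x ≠ ⊤) {g : X → ℝ≥0∞} (hg : Tendsto g (𝓝[≠] x) (𝓝 0))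
    (hfg : ∀ᶠ z in 𝓝[≠] x, f x - f z ≤ g z * edist x z) : localSlope f x = 0 := by
  rw [localSlope, if_neg hfx]
  split_ifs
  · rfl
  · rcases (𝓝[≠] x).eq_or_neBot with hbot | hne
    · rw [hbot, limsup_bot, bot_eq_zero]
    refine le_antisymm ?_ zero_le
    calc limsup (fun z => (f x - f z) / edist x z) (𝓝[≠] x) ≤ limsup g (𝓝[≠] x) :=
          limsup_le_limsup (hfg.mono fun z hz => ENNReal.div_le_of_le_mul hz)
      _ = 0 := hg.limsup_eq

lemma localSlope_abs_sub_rpow_one_div_three_eq_zero {X : Type*} [PseudoMetricSpace X]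
    {F : X → ℝ} {x : X} {y : ℝ} (hy : y ≠ F x) {g : X → ℝ} (hg : Tendsto g (𝓝[≠] x) (𝓝 0))
    (hF : ∀ᶠ z in 𝓝[≠] x, |F z - F x| ≤ g z * dist x z) :
    localSlope (fun z => ENNReal.ofReal |y - F z| ^ ((1:ℝ)/3)) x = 0 := by
  have hs : 0 < |y - F x| := abs_pos.2 (sub_ne_zero.2 hy)
  refine localSlope_eq_zero_of_le_mul
    (g := fun z => ENNReal.ofReal (g z / |y - F x| ^ ((2:ℝ)/3)))
    (ENNReal.rpow_ne_top_of_nonneg (by norm_num) ENNReal.ofReal_ne_top) ?_ ?_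
  · simpa using ENNReal.tendsto_ofReal (hg.div_const (|y - F x| ^ ((2:ℝ)/3)))
  filter_upwards [hF] with z hz
  have hsr : |(|y - F x| - |y - F z|)| ≤ |F z - F x| := by
    simpa using abs_abs_sub_abs_le_abs_sub (y - F x) (y - F z)
  simp only [ENNReal.ofReal_rpow_of_nonneg (abs_nonneg _) (by norm_num : (0:ℝ) ≤ 1/3)]
  rw [← ENNReal.ofReal_sub _ (by positivity), edist_dist, ← ENNReal.ofReal_mul' dist_nonneg]
  refine ENNReal.ofReal_le_ofReal ((rpow_one_div_three_sub_le hs (abs_nonneg _)).trans ?_)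
  rw [div_mul_eq_mul_div]
  gcongr
  exact hsr.trans hz

lemma inner_one_neg_one (p : EuclideanSpace ℝ (Fin 2)) : ⟪!₂[1, -1], p⟫ = p 0 - p 1 := by
  simp [EuclideanSpace.inner_eq_star_dotProduct, dotProduct, Fin.sum_univ_two]
  ring

lemma norm_one_neg_one : ‖(!₂[1, -1] : EuclideanSpace ℝ (Fin 2))‖ = √2 := by
  simp [EuclideanSpace.norm_eq, Fin.sum_univ_two]
  norm_num

lemma Fcub_preimage_eq_setOf_inner (c : ℝ) :
    Fcub ⁻¹' {c ^ 3} = {p | ⟪!₂[1, -1], p⟫ = c} := by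
  ext p
  simp only [mem_preimage, mem_singleton_iff, mem_ofPred_eq, inner_one_neg_one, Fcub]
  exact Odd.pow_inj ⟨1, rfl⟩

lemma infDist_Fcub_preimage (x : EuclideanSpace ℝ (Fin 2)) (c : ℝ) :
    infDist x (Fcub ⁻¹' {c ^ 3}) = |x 0 - x 1 - c| / √2 := by
  rw [Fcub_preimage_eq_setOf_inner, infDist_setOf_inner_eq (by simp), inner_one_neg_one,
    norm_one_neg_one]

lemma infDist_Fcub_preimage_le (x : EuclideanSpace ℝ (Fin 2)) (y : ℝ) :
    infDist x (Fcub ⁻¹' {y}) ≤ (2:ℝ) ^ ((1:ℝ)/6) * |y - Fcub x| ^ ((1:ℝ)/3) := by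
  obtain ⟨c, rfl⟩ := exists_pow_eq_of_odd (n := 3) ⟨1, rfl⟩ y
  rw [infDist_Fcub_preimage, abs_sub_comm]
  exact abs_sub_div_sqrt_two_le _ _

lemma abs_Fcub_sub_Fcub_diag_le (a : ℝ) (z : EuclideanSpace ℝ (Fin 2)) :
    |Fcub z - Fcub (WithLp.toLp 2 fun _ => a)| ≤
      8 * dist (WithLp.toLp 2 fun _ => a) z ^ 2 * dist (WithLp.toLp 2 fun _ => a) z := by
  set x : EuclideanSpace ℝ (Fin 2) := WithLp.toLp 2 fun _ => a
  have hcoord (i : Fin 2) : |a - z i| ≤ dist x z := PiLp.dist_apply_le x z i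
  have hu : |z 0 - z 1| ≤ 2 * dist x z := by
    calc |z 0 - z 1| = |(a - z 1) - (a - z 0)| := by ring_nf
      _ ≤ |a - z 1| + |a - z 0| := abs_sub _ _
      _ ≤ 2 * dist x z := by linarith [hcoord 0, hcoord 1]
  calc |Fcub z - Fcub x| = |z 0 - z 1| ^ 3 := by simp [Fcub, x, abs_pow]
    _ ≤ (2 * dist x z) ^ 3 := by gcongr
    _ = 8 * dist x z ^ 2 * dist x z := by ring

/-- the Remark after Theorem 2 of the paper: for `F(x) = (x₁ − x₂)³`,
(a) `F⁻¹(y) = {(t + y^{1/3}, t) : t ∈ ℝ}` (where `c = y^{1/3}` is the real cube root),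
`d(x, F⁻¹(y)) = |x₁ − x₂ − y^{1/3}|/√2 ≤ 2^{1/6} |y − F(x)|^{1/3}`, so `F` is metrically
`1/3`-regular at `(0,0)`; (b) nevertheless for every `x = (x₁,x₁)` and every `y ≠ 0`
the local slope `|∇ φ^{1/3}(·,y)|(x) = 0`, where `φ(x,y) = |y − F(x)|`. -/
theorem cube_map_third_regular_but_localSlope_zero :
    (∀ (x : EuclideanSpace ℝ (Fin 2)) (y c : ℝ), c ^ 3 = y →
      (Fcub ⁻¹' {y} = {p : EuclideanSpace ℝ (Fin 2) | ∃ t : ℝ, p 0 = t + c ∧ p 1 = t} ∧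
        Metric.infDist x (Fcub ⁻¹' {y}) = |x 0 - x 1 - c| / Real.sqrt 2 ∧
        Metric.infDist x (Fcub ⁻¹' {y}) ≤
          (2:ℝ) ^ ((1:ℝ)/6) * |y - Fcub x| ^ ((1:ℝ)/3))) ∧
    (∃ τ > (0:ℝ), ∃ δ > (0:ℝ), ∀ (x : EuclideanSpace ℝ (Fin 2)) (y : ℝ),
      ‖x‖ < δ → |y| < δ →
      Metric.infDist x (Fcub ⁻¹' {y}) ≤ τ * |y - Fcub x| ^ ((1:ℝ)/3)) ∧
    (∀ (a y : ℝ), y ≠ 0 →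
      localSlope
        (fun p : EuclideanSpace ℝ (Fin 2) => ENNReal.ofReal |y - Fcub p| ^ ((1:ℝ)/3))
        (WithLp.toLp 2 (fun _ => a)) = 0) := by
  refine ⟨fun x y c hc => ?_, ⟨_, by positivity, 1, one_pos, fun x y _ _ =>
    infDist_Fcub_preimage_le x y⟩, fun a y hy => ?_⟩
  · subst hc
    refine ⟨?_, infDist_Fcub_preimage x c, infDist_Fcub_preimage_le x _⟩
    rw [Fcub_preimage_eq_setOf_inner]
    ext p
    simp only [mem_ofPred_eq, inner_one_neg_one]
    exact ⟨fun h => ⟨p 1, by linarith, rfl⟩, fun ⟨t, h0, h1⟩ => by linarith⟩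
  · set x : EuclideanSpace ℝ (Fin 2) := WithLp.toLp 2 fun _ => a
    have hdist : Continuous fun z => 8 * dist x z ^ 2 := by fun_prop
    refine localSlope_abs_sub_rpow_one_div_three_eq_zero (by simpa [Fcub, x] using hy)
      ?_ (Eventually.of_forall (abs_Fcub_sub_Fcub_diag_le a))
    simpa using (hdist.tendsto x).mono_left nhdsWithin_le_nhds

end
end

section
/- Let X be a Banach space, Y a normed space and (u,v) ∈ X×Y. Suppose F : X ⇉ Y is a closed set-valued map that is directionally metrically regular at (x̄,ȳ) ∈ gph F in direction (u,v) with modulus τ > 0. If g : X → Y is locally Lipschitz around x̄ with constant λ > 0 satisfying λτ < 1, and g is Hadamard differentiable at x̄ with respect to the direction u, then the set-valued map F + g (defined by (F+g)(x) = F(x) + g(x)) is directionally metrically regular at (x̄, ȳ + g(x̄)) in the direction (u, v + Dg(x̄)(u)). -/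
open Filter Metric Set Topology
open scoped ENNReal NNReal Classical

noncomputable section

/-- `g` is Hadamard differentiable at `xbar` with respect to the direction `u`,
with derivative `L = Dg(xbar)(u)`:  `(g(xbar + t w) − g(xbar))/t → L` as `t ↓ 0, w → u`. -/
def HadamardDirDeriv {X Y : Type*} [NormedAddCommGroup X] [NormedSpace ℝ X]
    [NormedAddCommGroup Y] [NormedSpace ℝ Y] (g : X → Y) (xbar u : X) (L : Y) : Prop :=
  Tendsto (fun p : ℝ × X => (p.1)⁻¹ • (g (xbar + p.1 • p.2) - g xbar))
    ((𝓝[>] (0:ℝ)) ×ˢ 𝓝 u) (𝓝 L)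

/-!
Fix `τ₁ ∈ (τ, 1 / lam)`. For `(x, y)` near `(xbar, ybar + g xbar)` in the cone around
`(u, v + L)`, put `d = d(y - g x, F x)`. Every `x'` within `τ₁ d / (1 - lam τ₁)` of `x` gives a
pair `(x', y - g x')` in the region where `F` is regular: Hadamard differentiability of `g` carries
the cone condition over, and the Lipschitz bound controls the norms. On that ball the
Lyusternik–Graves iteration `x_{k+1} ∈ F⁻¹(y - g x_k)` converges geometrically with ratio
`lam τ₁ < 1` to some `ξ` with `y ∈ F ξ + g ξ`, at distance at most `τ₁ d / (1 - lam τ₁)` from `x`.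
-/

theorem exists_seq_of_step {α : Type*} {P : ℕ → α → Prop} {R : ℕ → α → α → Prop} {a : α}
    (h0 : P 0 a) (hstep : ∀ k z, P k z → ∃ z', P (k + 1) z' ∧ R k z z') :
    ∃ s : ℕ → α, s 0 = a ∧ ∀ k, P k (s k) ∧ R k (s k) (s (k + 1)) := by
  choose! next hnext hR using hstep
  let s : ℕ → α := fun k => Nat.rec a next k
  have hP : ∀ k, P k (s k) := fun k => Nat.rec h0 (fun k ih => hnext k _ ih) k
  exact ⟨s, rfl, fun k => ⟨hP k, hR k _ (hP k)⟩⟩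

open Pointwise in
theorem infEDist_setOf_sub_mem {Y : Type*} [SeminormedAddCommGroup Y] (s : Set Y) (c y : Y) :
    infEDist y {w : Y | w - c ∈ s} = infEDist (y - c) s := by
  have hs : {w : Y | w - c ∈ s} = c +ᵥ s := by
    ext w
    simp [Set.mem_vadd_set_iff_neg_vadd_mem, sub_eq_neg_add]
  rw [hs, ← infEDist_vadd c (y - c), vadd_eq_add, add_sub_cancel]

theorem norm_inv_smul_sub {E : Type*} [SeminormedAddCommGroup E] [NormedSpace ℝ E] {t : ℝ}
    (ht : 0 < t) (a u : E) : ‖t⁻¹ • a - u‖ = t⁻¹ * ‖a - t • u‖ := by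
  rw [← norm_smul_of_nonneg (inv_nonneg.2 ht.le), smul_sub, inv_smul_smul₀ ht.ne']

theorem norm_add_norm_sub_le_of_norm_le {X Y : Type*} [SeminormedAddCommGroup X]
    [SeminormedAddCommGroup Y] {x x' xbar : X} {b c : Y} {lam : ℝ} (hlam : 0 ≤ lam)
    (hc : ‖c‖ ≤ lam * ‖x' - xbar‖) :
    ‖x' - xbar‖ + ‖b - c‖ ≤ (1 + lam) * (‖x - xbar‖ + ‖b‖ + ‖x' - x‖) ∧
      ‖x - xbar‖ + ‖b‖ ≤ (1 + lam) * (‖x' - xbar‖ + ‖b - c‖) + ‖x' - x‖ := by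
  have hxx' : ‖x' - xbar‖ ≤ ‖x - xbar‖ + ‖x' - x‖ :=
    (norm_sub_le_norm_sub_add_norm_sub x' x xbar).trans_eq (add_comm _ _)
  have hx'x : ‖x - xbar‖ ≤ ‖x' - xbar‖ + ‖x' - x‖ :=
    (norm_sub_le_norm_sub_add_norm_sub x x' xbar).trans_eq (by rw [norm_sub_rev x x', add_comm])
  have hbc := norm_sub_le b c
  have hcb := norm_sub_norm_le b c
  constructor
  · linarith [mul_le_mul_of_nonneg_left hxx' hlam, mul_nonneg hlam (norm_nonneg b)]
  · linarith [mul_nonneg hlam (norm_nonneg (b - c))]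

section Iteration

variable {X Y : Type*} [MetricSpace X] [PseudoMetricSpace Y]

theorem exists_dist_lt_of_infEDist_le_mul {A : Set X} {z : X} {D : ℝ≥0∞} {τ τ₁ e : ℝ} (hτ : 0 ≤ τ)
    (hττ₁ : τ < τ₁) (he : 0 < e) (hD : D ≤ ENNReal.ofReal e)
    (hreg : infEDist z A ≤ ENNReal.ofReal τ * D) : ∃ z' ∈ A, dist z z' < τ₁ * e := by
  have hlt : infEDist z A < ENNReal.ofReal (τ₁ * e) := calc
    infEDist z A ≤ ENNReal.ofReal τ * ENNReal.ofReal e := hreg.trans (by gcongr)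
    _ = ENNReal.ofReal (τ * e) := (ENNReal.ofReal_mul hτ).symm
    _ < ENNReal.ofReal (τ₁ * e) :=
      (ENNReal.ofReal_lt_ofReal_iff (by nlinarith)).2 (by nlinarith)
  obtain ⟨z', hz', hzz'⟩ := infEDist_lt_iff.1 hlt
  exact ⟨z', hz', edist_lt_ofReal.1 hzz'⟩

theorem exists_apply_mem_of_dist_le_geometric [CompleteSpace X] {F : X → Set Y}
    (hF : IsClosed {p : X × Y | p.2 ∈ F p.1}) {h : X → Y} {S : Set X} (hS : IsClosed S)
    (hh : ContinuousOn h S) {s : ℕ → X} (hsS : ∀ k, s k ∈ S) (hsF : ∀ k, h (s k) ∈ F (s (k + 1)))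
    {C q : ℝ} (hq : q < 1) (hs : ∀ k, dist (s k) (s (k + 1)) ≤ C * q ^ k) :
    ∃ ξ, dist (s 0) ξ ≤ C / (1 - q) ∧ h ξ ∈ F ξ := by
  obtain ⟨ξ, hξ⟩ := cauchySeq_tendsto_of_complete (cauchySeq_of_le_geometric q C hq hs)
  have hξS : ξ ∈ S := hS.mem_of_tendsto hξ (Eventually.of_forall hsS)
  have hhs : Tendsto (h ∘ s) atTop (𝓝 (h ξ)) :=
    (hh ξ hξS).tendsto.comp (tendsto_nhdsWithin_iff.2 ⟨hξ, Eventually.of_forall hsS⟩)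
  exact ⟨ξ, dist_le_of_le_geometric_of_tendsto₀ q C hq hs hξ,
    hF.mem_of_tendsto ((hξ.comp (tendsto_add_atTop_nat 1)).prodMk_nhds hhs)
      (Eventually.of_forall hsF)⟩

theorem exists_mem_closedBall_apply_mem [CompleteSpace X] {F : X → Set Y}
    (hF : IsClosed {p : X × Y | p.2 ∈ F p.1}) {h : X → Y} {x : X} {τ τ₁ lam d : ℝ} (hτ : 0 ≤ τ)
    (hττ₁ : τ < τ₁) (hlam : 0 < lam) (hq : lam * τ₁ < 1) (hd : 0 ≤ d)
    (hLip : ∀ a ∈ closedBall x (τ₁ / (1 - lam * τ₁) * d),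
      ∀ b ∈ closedBall x (τ₁ / (1 - lam * τ₁) * d), dist (h a) (h b) ≤ lam * dist a b)
    (hreg : ∀ z ∈ closedBall x (τ₁ / (1 - lam * τ₁) * d),
      infEDist (h z) (F z) ≤ ENNReal.ofReal d →
      infEDist z {z' | h z ∈ F z'} ≤ ENNReal.ofReal τ * infEDist (h z) (F z))
    (hx : infEDist (h x) (F x) ≤ ENNReal.ofReal d) :
    ∃ ξ ∈ closedBall x (τ₁ / (1 - lam * τ₁) * d), h ξ ∈ F ξ := by
  set q := lam * τ₁
  set R := τ₁ / (1 - q) * d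
  have hτ₁ : 0 < τ₁ := hτ.trans_lt hττ₁
  have hq0 : 0 < q := mul_pos hlam hτ₁
  have h1q : 0 < 1 - q := by linarith
  have hR : 0 ≤ R := by positivity
  rcases eq_or_ne (infEDist (h x) (F x)) 0 with hx0 | hx0
  · have hFx : IsClosed (F x) := hF.preimage (Continuous.prodMk_right x)
    exact ⟨x, mem_closedBall_self hR, hFx.closure_eq ▸ mem_closure_iff_infEDist_zero.2 hx0⟩
  have hd0 : 0 < d := by
    by_contra! hd0
    exact hx0 (le_antisymm (hx.trans_eq (ENNReal.ofReal_eq_zero.2 hd0)) zero_le')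
  let P : ℕ → X → Prop := fun k z =>
    dist z x ≤ τ₁ * d * (1 - q ^ k) / (1 - q) ∧ infEDist (h z) (F z) ≤ ENNReal.ofReal (q ^ k * d)
  have hPR : ∀ k z, dist z x ≤ τ₁ * d * (1 - q ^ k) / (1 - q) → z ∈ closedBall x R :=
    fun k z hz => hz.trans <| (div_le_div_of_nonneg_right (mul_le_of_le_one_right
      (by positivity) (by linarith [pow_pos hq0 k])) h1q.le).trans_eq (by ring)
  have step : ∀ k z, P k z → ∃ z', P (k + 1) z' ∧ h z ∈ F z' ∧ dist z z' ≤ τ₁ * d * q ^ k := by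
    intro k z hz
    have hzR := hPR k z hz.1
    have hqk : q ^ k * d ≤ d := mul_le_of_le_one_left hd0.le (pow_le_one₀ hq0.le hq.le)
    obtain ⟨z', hz'F, hzz'⟩ := exists_dist_lt_of_infEDist_le_mul hτ hττ₁ (by positivity) hz.2
      (hreg z hzR (hz.2.trans (ENNReal.ofReal_le_ofReal hqk)))
    have hz'x : dist z' x ≤ τ₁ * d * (1 - q ^ (k + 1)) / (1 - q) := calc
      dist z' x ≤ dist z z' + dist z x := dist_triangle_left _ _ _
      _ ≤ τ₁ * (q ^ k * d) + τ₁ * d * (1 - q ^ k) / (1 - q) := add_le_add hzz'.le hz.1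
      _ = τ₁ * d * (1 - q ^ (k + 1)) / (1 - q) := by field_simp; ring
    have hz'R : z' ∈ closedBall x R := hPR (k + 1) z' hz'x
    refine ⟨z', ⟨hz'x, ?_⟩, hz'F, by linarith⟩
    calc infEDist (h z') (F z') ≤ edist (h z') (h z) := infEDist_le_edist_of_mem hz'F
      _ ≤ ENNReal.ofReal (q ^ (k + 1) * d) := by
        rw [edist_le_ofReal (by positivity)]
        calc dist (h z') (h z) ≤ lam * dist z' z := hLip z' hz'R z hzR
          _ ≤ lam * (τ₁ * (q ^ k * d)) := by rw [dist_comm]; gcongr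
          _ = q ^ (k + 1) * d := by ring
  obtain ⟨s, rfl, hs⟩ := exists_seq_of_step (P := P) (a := x) ⟨by simp, by simpa using hx⟩ step
  obtain ⟨ξ, hξ, hξF⟩ := exists_apply_mem_of_dist_le_geometric hF isClosed_closedBall
    (LipschitzOnWith.of_dist_le' hLip).continuousOn (fun k => hPR k _ (hs k).1.1)
    (fun k => (hs k).2.1) hq (fun k => (hs k).2.2)
  exact ⟨ξ, by rw [mem_closedBall, dist_comm]; exact hξ.trans_eq (by ring), hξF⟩

theorem infEDist_le_of_regular_on_closedBall [CompleteSpace X] {F : X → Set Y}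
    (hF : IsClosed {p : X × Y | p.2 ∈ F p.1}) {h : X → Y} {x : X} {τ τ₁ lam d : ℝ} (hτ : 0 ≤ τ)
    (hττ₁ : τ < τ₁) (hlam : 0 < lam) (hq : lam * τ₁ < 1) (hd : 0 ≤ d)
    (hLip : ∀ a ∈ closedBall x (τ₁ / (1 - lam * τ₁) * d),
      ∀ b ∈ closedBall x (τ₁ / (1 - lam * τ₁) * d), dist (h a) (h b) ≤ lam * dist a b)
    (hreg : ∀ z ∈ closedBall x (τ₁ / (1 - lam * τ₁) * d),
      infEDist (h z) (F z) ≤ ENNReal.ofReal d →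
      infEDist z {z' | h z ∈ F z'} ≤ ENNReal.ofReal τ * infEDist (h z) (F z))
    (hx : infEDist (h x) (F x) = ENNReal.ofReal d) :
    infEDist x {z | h z ∈ F z} ≤ ENNReal.ofReal (τ₁ / (1 - lam * τ₁)) * infEDist (h x) (F x) := by
  have hT : 0 ≤ τ₁ / (1 - lam * τ₁) := div_nonneg (hτ.trans hττ₁.le) (sub_pos.2 hq).le
  obtain ⟨ξ, hξ, hξF⟩ := exists_mem_closedBall_apply_mem hF hτ hττ₁ hlam hq hd hLip hreg hx.le
  calc infEDist x {z | h z ∈ F z} ≤ edist x ξ := infEDist_le_edist_of_mem hξF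
    _ ≤ ENNReal.ofReal (τ₁ / (1 - lam * τ₁) * d) :=
      (edist_le_ofReal (mul_nonneg hT hd)).2 (dist_comm x ξ ▸ hξ)
    _ = _ := by rw [hx, ENNReal.ofReal_mul hT]

end Iteration

section Cone

variable {X Y : Type*} [NormedAddCommGroup X] [NormedSpace ℝ X] [NormedAddCommGroup Y]
  [NormedSpace ℝ Y]

theorem zero_mem_coneBall2 {u : X} {v : Y} {ε : ℝ} (hε : 0 < ε) : (0 : X × Y) ∈ coneBall2 u v ε :=
  ⟨0, le_rfl, u, v, by simpa, by ext <;> simp⟩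

theorem mem_coneBall2_of_norm_sub_lt {u a : X} {v b : Y} {ε t : ℝ} (ht : 0 < t)
    (h : ‖a - t • u‖ + ‖b - t • v‖ < t * ε) : (a, b) ∈ coneBall2 u v ε := by
  refine ⟨t, ht.le, t⁻¹ • a, t⁻¹ • b, ?_, by simp [smul_inv_smul₀ ht.ne']⟩
  rw [norm_inv_smul_sub ht, norm_inv_smul_sub ht, ← mul_add]
  exact (inv_mul_lt_iff₀ ht).2 h

theorem exists_norm_sub_lt_of_mem_coneBall2 {u a : X} {v b : Y} {ε : ℝ}
    (h : (a, b) ∈ coneBall2 u v ε) (hab : 0 < ‖a‖ + ‖b‖) :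
    ∃ t > 0, ‖a - t • u‖ + ‖b - t • v‖ < t * ε := by
  obtain ⟨t, ht, w, z, hwz, hab'⟩ := h
  obtain ⟨rfl, rfl⟩ := Prod.ext_iff.1 hab'
  have ht0 : 0 < t := ht.lt_of_ne <| by rintro rfl; simp at hab
  refine ⟨t, ht0, ?_⟩
  rw [← smul_sub, ← smul_sub, norm_smul_of_nonneg ht, norm_smul_of_nonneg ht, ← mul_add]
  exact mul_lt_mul_of_pos_left hwz ht0

theorem coneBall2_zero {ε : ℝ} (hε : 0 < ε) : coneBall2 (0 : X) (0 : Y) ε = univ := by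
  refine eq_univ_of_forall fun ⟨a, b⟩ => mem_coneBall2_of_norm_sub_lt
    (t := (‖a‖ + ‖b‖ + 1) / ε) (by positivity) ?_
  rw [smul_zero, smul_zero, sub_zero, sub_zero, div_mul_cancel₀ _ hε.ne']
  linarith

theorem abs_norm_add_norm_sub_le (a u : X) (b v : Y) {t : ℝ} (ht : 0 ≤ t) :
    |‖a‖ + ‖b‖ - t * (‖u‖ + ‖v‖)| ≤ ‖a - t • u‖ + ‖b - t • v‖ := by
  have ha := abs_le.1 (abs_norm_sub_norm_le a (t • u))
  have hb := abs_le.1 (abs_norm_sub_norm_le b (t • v))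
  rw [norm_smul_of_nonneg ht] at ha hb
  rw [abs_le]
  constructor <;> linarith [ha.1, ha.2, hb.1, hb.2]

theorem add_sub_sub_mem_coneBall2 {u a p : X} {v w b c q : Y} {t ε₁ ε₂ ε₃ ε : ℝ} (ht : 0 < t)
    (hab : ‖a - t • u‖ + ‖b - t • (v + w)‖ < t * ε₁) (hc : ‖c - t • w‖ < t * ε₂)
    (hpq : ‖p‖ + ‖q‖ ≤ t * ε₃) (hε : ε₁ + ε₂ + ε₃ ≤ ε) :
    (a + p, b - c - q) ∈ coneBall2 u v ε := by
  refine mem_coneBall2_of_norm_sub_lt ht ?_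
  calc ‖a + p - t • u‖ + ‖b - c - q - t • v‖
      = ‖(a - t • u) + p‖ + ‖(b - t • (v + w)) - (c - t • w) - q‖ := by
        rw [smul_add]; congr 2 <;> abel
    _ ≤ (‖a - t • u‖ + ‖p‖) + (‖b - t • (v + w)‖ + ‖c - t • w‖ + ‖q‖) :=
      add_le_add (norm_add_le _ _) ((norm_sub_le _ _).trans (add_le_add_left (norm_sub_le _ _) _))
    _ < t * ε := by nlinarith

end Cone

namespace HadamardDirDeriv

variable {X Y : Type*} [NormedAddCommGroup X] [NormedSpace ℝ X] [NormedAddCommGroup Y]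
  [NormedSpace ℝ Y] {g : X → Y} {xbar u : X} {L : Y}

theorem eq_zero (hg : HadamardDirDeriv g xbar 0 L) : L = 0 := by
  have h : Tendsto (fun t : ℝ => (t, (0 : X))) (𝓝[>] 0) (𝓝[>] 0 ×ˢ 𝓝 0) :=
    tendsto_id.prodMk tendsto_const_nhds
  refine tendsto_nhds_unique (hg.comp h) ?_
  simp [Function.comp_def]

theorem exists_norm_sub_smul_lt (hg : HadamardDirDeriv g xbar u L) {e : ℝ} (he : 0 < e) :
    ∃ t₀ > 0, ∃ ε > 0, ∀ t, 0 < t → t < t₀ → ∀ a : X, ‖a - t • u‖ < t * ε →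
      ‖g (xbar + a) - g xbar - t • L‖ < t * e := by
  obtain ⟨s, hs, w, hw, hsw⟩ := eventually_prod_iff.1 (Metric.tendsto_nhds.1 hg e he)
  obtain ⟨t₀, ht₀, hIoo⟩ := mem_nhdsGT_iff_exists_Ioo_subset.1 hs
  obtain ⟨ε, hε, hball⟩ := Metric.mem_nhds_iff.1 hw
  refine ⟨t₀, ht₀, ε, hε, fun t ht htt₀ a ha => ?_⟩
  have hmem : t⁻¹ • a ∈ ball u ε := by
    rw [mem_ball, dist_eq_norm, norm_inv_smul_sub ht]
    exact (inv_mul_lt_iff₀ ht).2 ha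
  have hlt := hsw (hIoo ⟨ht, htt₀⟩) (hball hmem)
  rw [dist_eq_norm, smul_inv_smul₀ ht.ne'] at hlt
  calc ‖g (xbar + a) - g xbar - t • L‖ = t * ‖t⁻¹ • (g (xbar + a) - g xbar) - L‖ := by
        rw [← norm_smul_of_nonneg ht.le, smul_sub, smul_inv_smul₀ ht.ne']
    _ < t * e := by gcongr

end HadamardDirDeriv

namespace HadamardDirDeriv

variable {X Y : Type*} [NormedAddCommGroup X] [NormedSpace ℝ X] [NormedAddCommGroup Y]
  [NormedSpace ℝ Y] {g : X → Y} {xbar u : X} {L : Y}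

theorem exists_mem_coneBall2_of_pos (hg : HadamardDirDeriv g xbar u L) (v ybar : Y) {ε₀ : ℝ}
    (hε₀ : 0 < ε₀) (hN : 0 < ‖u‖ + ‖v + L‖) :
    ∃ ε > 0, ∃ δ > 0, ∃ μ > 0, ∀ x x' : X, ∀ y : Y,
      ‖x - xbar‖ + ‖y - (ybar + g xbar)‖ < δ →
      (x - xbar, y - (ybar + g xbar)) ∈ coneBall2 u (v + L) ε →
      ‖x' - x‖ + ‖g x' - g x‖ ≤ μ * (‖x - xbar‖ + ‖y - (ybar + g xbar)‖) →
      (x' - xbar, y - g x' - ybar) ∈ coneBall2 u v ε₀ := by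
  set N := ‖u‖ + ‖v + L‖
  obtain ⟨t₀, ht₀, εw, hεw, hHad⟩ := hg.exists_norm_sub_smul_lt (e := ε₀ / 3) (by positivity)
  set ε := min εw (min (ε₀ / 3) (N / 2))
  have hεεw : ε ≤ εw := min_le_left _ _
  have hεε₀ : ε ≤ ε₀ / 3 := (min_le_right _ _).trans (min_le_left _ _)
  have hεN : ε ≤ N / 2 := (min_le_right _ _).trans (min_le_right _ _)
  refine ⟨ε, by positivity, N * t₀ / 2, by positivity, ε₀ / (3 * (N + ε)), by positivity,
    fun x x' y hρδ hcone hx' => ?_⟩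
  rcases (add_nonneg (norm_nonneg (x - xbar)) (norm_nonneg (y - (ybar + g xbar)))).eq_or_lt
    with hρ | hρ
  · have hx : x = xbar := sub_eq_zero.1 <| norm_eq_zero.1 <| by
      linarith [norm_nonneg (x - xbar), norm_nonneg (y - (ybar + g xbar))]
    have hy : y = ybar + g xbar := sub_eq_zero.1 <| norm_eq_zero.1 <| by
      linarith [norm_nonneg (x - xbar), norm_nonneg (y - (ybar + g xbar))]
    have hxx' : x' = x := sub_eq_zero.1 <| norm_eq_zero.1 <| by
      rw [← hρ, mul_zero] at hx'
      linarith [norm_nonneg (x' - x), norm_nonneg (g x' - g x)]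
    subst hx hy hxx'
    simpa [← Prod.zero_eq_mk] using zero_mem_coneBall2 (u := u) (v := v) hε₀
  obtain ⟨t, ht, hat⟩ := exists_norm_sub_lt_of_mem_coneBall2 hcone hρ
  have hρt :=
    abs_le.1 (abs_norm_add_norm_sub_le (x - xbar) u (y - (ybar + g xbar)) (v + L) ht.le)
  have htε : t * ε ≤ t * (N / 2) := mul_le_mul_of_nonneg_left hεN ht.le
  have htt₀ : t < t₀ := lt_of_mul_lt_mul_right (by nlinarith) hN.le
  have hgx : ‖g x - g xbar - t • L‖ < t * (ε₀ / 3) := by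
    have hau : ‖x - xbar - t • u‖ < t * εw := by
      linarith [mul_le_mul_of_nonneg_left hεεw ht.le,
        norm_nonneg (y - (ybar + g xbar) - t • (v + L))]
    simpa using hHad t ht htt₀ (x - xbar) hau
  have hμ : ‖x' - x‖ + ‖g x' - g x‖ ≤ t * (ε₀ / 3) := calc
    _ ≤ ε₀ / (3 * (N + ε)) * (‖x - xbar‖ + ‖y - (ybar + g xbar)‖) := hx'
    _ ≤ ε₀ / (3 * (N + ε)) * (t * (N + ε)) := by gcongr; linarith
    _ = t * (ε₀ / 3) := by field_simp [(by positivity : N + ε ≠ 0)]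
  have hat' : ‖x - xbar - t • u‖ + ‖y - (ybar + g xbar) - t • (v + L)‖ < t * (ε₀ / 3) :=
    hat.trans_le (mul_le_mul_of_nonneg_left hεε₀ ht.le)
  convert add_sub_sub_mem_coneBall2 (ε := ε₀) ht hat' hgx hμ (by linarith) using 2 <;> abel

/-- If `x - xbar ≈ t • u`, then `g x - g xbar ≈ t • L` by Hadamard differentiability, so passing
from `y` to `y - g x'` turns the direction `v + L` back into `v`. -/
theorem exists_mem_coneBall2 (hg : HadamardDirDeriv g xbar u L) (v ybar : Y) {ε₀ : ℝ}
    (hε₀ : 0 < ε₀) :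
    ∃ ε > 0, ∃ δ > 0, ∃ μ > 0, ∀ x x' : X, ∀ y : Y,
      ‖x - xbar‖ + ‖y - (ybar + g xbar)‖ < δ →
      (x - xbar, y - (ybar + g xbar)) ∈ coneBall2 u (v + L) ε →
      ‖x' - x‖ + ‖g x' - g x‖ ≤ μ * (‖x - xbar‖ + ‖y - (ybar + g xbar)‖) →
      (x' - xbar, y - g x' - ybar) ∈ coneBall2 u v ε₀ := by
  by_cases hdeg : u = 0 ∧ v + L = 0
  · obtain ⟨rfl, hvL⟩ := hdeg
    obtain rfl : v = 0 := by rwa [hg.eq_zero, add_zero] at hvL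
    exact ⟨1, one_pos, 1, one_pos, 1, one_pos, fun _ _ _ _ _ _ => by simp [coneBall2_zero hε₀]⟩
  refine hg.exists_mem_coneBall2_of_pos v ybar hε₀ (lt_of_le_of_ne (by positivity) ?_)
  contrapose! hdeg
  exact ⟨norm_eq_zero.1 (by linarith [norm_nonneg u, norm_nonneg (v + L)]),
    norm_eq_zero.1 (by linarith [norm_nonneg u, norm_nonneg (v + L)])⟩

theorem exists_region_transfer (hg : HadamardDirDeriv g xbar u L) (v ybar : Y) {lam r : ℝ}
    (hlam : 0 ≤ lam) (hr : 0 < r)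
    (hLip : ∀ x ∈ ball xbar r, ∀ z ∈ ball xbar r, ‖g x - g z‖ ≤ lam * ‖x - z‖)
    {T δ₀ ε₀ η₀ : ℝ} (hT : 0 < T) (hδ₀ : 0 < δ₀) (hε₀ : 0 < ε₀) (hη₀ : 0 < η₀) :
    ∃ δ > 0, ∃ ε > 0, ∃ η > 0, ∀ x : X, ∀ y : Y, ∀ d : ℝ,
      ‖x - xbar‖ + ‖y - (ybar + g xbar)‖ < δ →
      (x - xbar, y - (ybar + g xbar)) ∈ coneBall2 u (v + L) ε →
      d ≤ η * (‖x - xbar‖ + ‖y - (ybar + g xbar)‖) →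
      ∀ x' ∈ closedBall x (T * d), x' ∈ ball xbar r ∧
        ‖x' - xbar‖ + ‖y - g x' - ybar‖ < δ₀ ∧
        (x' - xbar, y - g x' - ybar) ∈ coneBall2 u v ε₀ ∧
        d ≤ η₀ * (‖x' - xbar‖ + ‖y - g x' - ybar‖) := by
  obtain ⟨ε, hε, δ₁, hδ₁, μ, hμ, hcone⟩ := hg.exists_mem_coneBall2 v ybar hε₀
  have hK : 0 < 1 + lam := by linarith
  set η := min (1 / (2 * T)) (min (η₀ / (2 * (1 + lam))) (μ / ((1 + lam) * T)))
  have hη : 0 < η := by positivity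
  have hηT : T * η ≤ 1 / 2 := by
    rw [← le_div_iff₀' hT, div_div]; exact min_le_left _ _
  have hηK : 2 * (1 + lam) * η ≤ η₀ := by
    rw [← le_div_iff₀' (by positivity)]; exact (min_le_right _ _).trans (min_le_left _ _)
  have hημ : (1 + lam) * T * η ≤ μ := by
    rw [← le_div_iff₀' (by positivity)]; exact (min_le_right _ _).trans (min_le_right _ _)
  refine ⟨min δ₁ (min (r / 2) (δ₀ / (2 * (1 + lam)))), by positivity, ε, hε, η, hη,
    fun x y d hρ hxc hd x' hx' => ?_⟩
  set ρ := ‖x - xbar‖ + ‖y - (ybar + g xbar)‖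
  set σ := ‖x' - xbar‖ + ‖y - g x' - ybar‖
  have hρδ₁ : ρ < δ₁ := hρ.trans_le (min_le_left _ _)
  have hρr : ρ < r / 2 := hρ.trans_le ((min_le_right _ _).trans (min_le_left _ _))
  have hρδ₀ : 2 * (1 + lam) * ρ < δ₀ := by
    rw [← lt_div_iff₀' (by positivity)]
    exact hρ.trans_le ((min_le_right _ _).trans (min_le_right _ _))
  have hρ0 : 0 ≤ ρ := by positivity
  have hs : ‖x' - x‖ ≤ T * η * ρ := by
    rw [← dist_eq_norm, mul_assoc]
    exact (mem_closedBall.1 hx').trans (mul_le_mul_of_nonneg_left hd hT.le)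
  have hsρ : ‖x' - x‖ ≤ ρ / 2 :=
    hs.trans (by linarith [mul_le_mul_of_nonneg_right hηT hρ0])
  have hxx' : ‖x' - xbar‖ ≤ ‖x - xbar‖ + ‖x' - x‖ :=
    (norm_sub_le_norm_sub_add_norm_sub x' x xbar).trans_eq (add_comm _ _)
  have hxr : x ∈ ball xbar r := by
    rw [mem_ball_iff_norm]; linarith [norm_nonneg (y - (ybar + g xbar))]
  have hx'r : x' ∈ ball xbar r := by
    rw [mem_ball_iff_norm]; linarith [norm_nonneg (y - (ybar + g xbar))]
  have hgxx' := hLip x' hx'r x hxr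
  obtain ⟨hσ, hρσ⟩ := norm_add_norm_sub_le_of_norm_le (x := x) (b := y - (ybar + g xbar)) hlam
    (hLip x' hx'r xbar (mem_ball_self hr))
  rw [show y - (ybar + g xbar) - (g x' - g xbar) = y - g x' - ybar by abel] at hσ hρσ
  refine ⟨hx'r, ?_, hcone x x' y hρδ₁ hxc ?_, ?_⟩
  · linarith [mul_le_mul_of_nonneg_left hsρ hK.le]
  · linarith [mul_le_mul_of_nonneg_left hs hK.le, mul_le_mul_of_nonneg_right hημ hρ0,
      mul_le_mul_of_nonneg_left hs hlam]
  · have hρσ' : ρ ≤ 2 * (1 + lam) * σ := by linarith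
    linarith [mul_le_mul_of_nonneg_left hρσ' hη.le,
      mul_le_mul_of_nonneg_right hηK (by positivity : (0 : ℝ) ≤ σ)]

end HadamardDirDeriv

theorem dirMetricRegular_perturbation_general
    {X Y : Type*} [NormedAddCommGroup X] [NormedSpace ℝ X] [CompleteSpace X]
    [NormedAddCommGroup Y] [NormedSpace ℝ Y]
    (F : X → Set Y) (hF : IsClosed {p : X × Y | p.2 ∈ F p.1})
    (xbar : X) (ybar : Y) (u : X) (v : Y)
    (τ : ℝ) (hτ : 0 < τ) (hreg : DirHolderRegular F xbar ybar u v 1 τ)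
    (g : X → Y) (lam : ℝ) (hlam : 0 < lam) (hlamτ : lam * τ < 1)
    (hLip : ∃ r > (0:ℝ), ∀ x ∈ Metric.ball xbar r, ∀ z ∈ Metric.ball xbar r,
      ‖g x - g z‖ ≤ lam * ‖x - z‖)
    (L : Y) (hHad : HadamardDirDeriv g xbar u L) :
    ∃ τ' > (0:ℝ),
      DirHolderRegular (fun x : X => {w : Y | w - g x ∈ F x})
        xbar (ybar + g xbar) u (v + L) 1 τ' := by
  obtain ⟨δ₀, hδ₀, ε₀, hε₀, η₀, hη₀, H⟩ := hreg
  obtain ⟨r, hr, hLipr⟩ := hLip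
  obtain ⟨τ₁, hττ₁, hτ₁⟩ := exists_between ((lt_div_iff₀' hlam).2 hlamτ)
  have hq : lam * τ₁ < 1 := (lt_div_iff₀' hlam).1 hτ₁
  have hT : 0 < τ₁ / (1 - lam * τ₁) := div_pos (hτ.trans hττ₁) (sub_pos.2 hq)
  obtain ⟨δ, hδ, ε, hε, η, hη, hnear⟩ :=
    hHad.exists_region_transfer v ybar hlam.le hr hLipr hT hδ₀ hε₀ hη₀
  refine ⟨_, hT, δ, hδ, ε, hε, η, hη, fun x y hρ hcone hD => ?_⟩
  rw [div_one, Real.rpow_one] at hD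
  change infEDist y _ ≤ _ at hD
  change infEDist x _ ≤ _ * infEDist y _ ^ (1 : ℝ)
  rw [infEDist_setOf_sub_mem] at hD ⊢
  rw [ENNReal.rpow_one]
  have hDtop : infEDist (y - g x) (F x) ≠ ⊤ := ne_top_of_le_ne_top ENNReal.ofReal_ne_top hD
  have hnear_x := hnear x y _ hρ hcone (ENNReal.toReal_le_of_le_ofReal (by positivity) hD)
  refine infEDist_le_of_regular_on_closedBall hF (h := fun x' => y - g x') hτ.le hττ₁ hlam hq
    ENNReal.toReal_nonneg (fun a ha b hb => ?_) (fun z hz hzd => ?_)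
    (ENNReal.ofReal_toReal hDtop).symm
  · rw [dist_sub_left, dist_eq_norm, dist_eq_norm]
    exact hLipr a (hnear_x a ha).1 b (hnear_x b hb).1
  · obtain ⟨-, hzδ, hzc, hzη⟩ := hnear_x z hz
    have hFz := H z (y - g z) hzδ hzc
      (hzd.trans (ENNReal.ofReal_le_ofReal (by rwa [div_one, Real.rpow_one])))
    rwa [ENNReal.rpow_one] at hFz

/-- Theorem 4 of the paper: if the closed multifunction `F` is
directionally metrically regular at `(xbar, ybar) ∈ gph F` in direction `(u,v)` with
modulus `τ > 0`, and `g` is locally Lipschitz around `xbar` with constant `λ > 0`,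
`λτ < 1`, and Hadamard differentiable at `xbar` with respect to the direction `u` with
derivative `L = Dg(xbar)(u)`, then `F + g` is directionally metrically regular at
`(xbar, ybar + g(xbar))` in direction `(u, v + Dg(xbar)(u))`. -/
theorem dirMetricRegular_perturbation
    {X Y : Type*} [NormedAddCommGroup X] [NormedSpace ℝ X] [CompleteSpace X]
    [NormedAddCommGroup Y] [NormedSpace ℝ Y]
    (F : X → Set Y) (hF : IsClosed {p : X × Y | p.2 ∈ F p.1})
    (xbar : X) (ybar : Y) (hxy : ybar ∈ F xbar) (u : X) (v : Y)
    (τ : ℝ) (hτ : 0 < τ) (hreg : DirHolderRegular F xbar ybar u v 1 τ)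
    (g : X → Y) (lam : ℝ) (hlam : 0 < lam) (hlamτ : lam * τ < 1)
    (hLip : ∃ r > (0:ℝ), ∀ x ∈ Metric.ball xbar r, ∀ z ∈ Metric.ball xbar r,
      ‖g x - g z‖ ≤ lam * ‖x - z‖)
    (L : Y) (hHad : HadamardDirDeriv g xbar u L) :
    ∃ τ' > (0:ℝ),
      DirHolderRegular (fun x : X => {w : Y | w - g x ∈ F x})
        xbar (ybar + g xbar) u (v + L) 1 τ' :=
  dirMetricRegular_perturbation_general F hF xbar ybar u v τ hτ hreg g lam hlam hlamτ hLip L hHad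
end
end

section
/- Let X be a Banach space, Y a finite-dimensional normed space, g : X → Y continuously differentiable, K ⊆ Y closed convex, Φ(y) = {x : y ∈ g(x) − K}, x₀ ∈ Φ(0), d ∈ Y \ {0} and h ∈ X such that Dg(x₀)h − d ∈ T_K(g(x₀)). If G(x) := g(x) − K is directionally metrically regular at (x₀, 0) in the direction (h, d), then d ∈ int{Dg(x₀)X − T_K(g(x₀))} (Robinson's constraint qualification for the linearized problem holds at x₀ in direction d). -/
open Filter Metric Set Topology
open scoped ENNReal NNReal Classical

noncomputable section

open scoped Pointwise

/-- The contingent (tangent) cone to the convex set `K` at `z ∈ K`: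
`T_K(z) = {w : d(z + t w, K) = o(t) as t ↓ 0}`. -/
def tangentConeConv {Y : Type*} [NormedAddCommGroup Y] [NormedSpace ℝ Y]
    (K : Set Y) (z : Y) : Set Y :=
  {w : Y | Tendsto (fun t : ℝ => Metric.infDist (z + t • w) K / t) (𝓝[>] (0:ℝ)) (𝓝 0)}

/-! Along directions `(h, y)` with `y` near `d`, the ray `t ↦ (x₀ + t h, t y)` is feasible up to
`O(t)` errors small compared with `t` (this is where `Dg(x₀)h − d ∈ T_K(g(x₀))` enters), so
directional regularity corrects it to points `x(t)` with `g(x(t)) − t y ∈ K` and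
`‖x(t) − x₀‖ = O(t)`. Linearizing `g` at `x₀` then writes `y` as
`Dg(x₀)((x(t) − x₀)/t) − (g(x(t)) − t y − g(x₀))/t + o(1)`, so a whole ball around `d` lies in the
closure of the convex set `Dg(x₀)X − cone(K − g(x₀))`. In finite dimensions a convex set and its
closure have the same interior, and `cone(K − g(x₀)) ⊆ T_K(g(x₀))`. -/

theorem Convex.interior_closure_eq_interior {V : Type*} [NormedAddCommGroup V] [NormedSpace ℝ V]
    [FiniteDimensional ℝ V] {s : Set V} (hs : Convex ℝ s) :
    interior (closure s) = interior s := by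
  rcases (interior (closure s)).eq_empty_or_nonempty with h | h
  · exact h.trans (subset_empty_iff.1 (h ▸ interior_mono subset_closure)).symm
  refine hs.interior_closure_eq_interior_of_nonempty_interior ?_
  rw [hs.interior_nonempty_iff_affineSpan_eq_top, eq_top_iff]
  rw [hs.closure.interior_nonempty_iff_affineSpan_eq_top] at h
  exact h ▸ affineSpan_le.2
    (closure_minimal (subset_affineSpan ℝ s) (affineSpan ℝ s).closed_of_finiteDimensional)

section TangentCone

variable {Y : Type*} [NormedAddCommGroup Y] [NormedSpace ℝ Y] {K : Set Y} {z : Y}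

theorem hull_preimage_add_subset_tangentConeConv (hK : Convex ℝ K) (hz : z ∈ K) :
    (ConvexCone.hull ℝ ((z + ·) ⁻¹' K) : Set Y) ⊆ tangentConeConv K z := by
  intro w hw
  obtain ⟨r, hr, v, hv, rfl⟩ := (ConvexCone.mem_hull_of_convex (hK.translate_preimage_right z)).1 hw
  refine tendsto_const_nhds.congr' ?_
  filter_upwards [Ioo_mem_nhdsGT (inv_pos.2 hr)] with t ht
  have hmem : z + t • r • v ∈ K := by
    have htr : t * r ∈ Icc (0 : ℝ) 1 :=
      ⟨(mul_pos ht.1 hr).le, by nlinarith [ht.2, mul_inv_cancel₀ hr.ne']⟩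
    simpa [smul_smul] using hK.add_smul_sub_mem hz hv htr
  rw [infDist_zero_of_mem hmem, zero_div]

theorem tendsto_infDist_div_of_tendsto_slope {w : Y} (hw : w ∈ tangentConeConv K z) {p : ℝ → Y}
    (hp : Tendsto (fun t => t⁻¹ • (p t - z)) (𝓝[>] 0) (𝓝 w)) :
    Tendsto (fun t => infDist (p t) K / t) (𝓝[>] 0) (𝓝 0) := by
  have hupper : Tendsto (fun t => infDist (z + t • w) K / t + ‖t⁻¹ • (p t - z) - w‖)
      (𝓝[>] 0) (𝓝 0) := by
    simpa using hw.add (tendsto_iff_norm_sub_tendsto_zero.1 hp)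
  refine tendsto_of_tendsto_of_tendsto_of_le_of_le' tendsto_const_nhds hupper ?_ ?_
  · filter_upwards [self_mem_nhdsWithin] with t (ht : 0 < t)
    exact div_nonneg infDist_nonneg ht.le
  · filter_upwards [self_mem_nhdsWithin] with t (ht : 0 < t)
    have hslope : ‖t⁻¹ • (p t - z) - w‖ = dist (p t) (z + t • w) / t := by
      have : t⁻¹ • (p t - z) - w = t⁻¹ • (p t - (z + t • w)) := by
        rw [smul_sub t⁻¹ (p t) (z + t • w), smul_add, inv_smul_smul₀ ht.ne', smul_sub, sub_sub]
      rw [this, norm_smul, norm_inv, Real.norm_of_nonneg ht.le, dist_eq_norm, inv_mul_eq_div]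
    rw [hslope, ← add_div]
    exact div_le_div_of_nonneg_right infDist_le_infDist_add_dist ht.le

end TangentCone

theorem infEDist_setOf_sub_mem_s12 {Y : Type*} [NormedAddCommGroup Y] {K : Set Y} (hK : K.Nonempty)
    (c y : Y) : infEDist y {y' | c - y' ∈ K} = ENNReal.ofReal (infDist (c - y) K) := by
  have hiso : Isometry (c - · : Y → Y) := Isometry.of_dist_eq fun _ _ => dist_sub_left _ _ _
  have himage : {y' | c - y' ∈ K} = (c - ·) '' K :=
    ext fun y' => ⟨fun h => ⟨c - y', h, sub_sub_cancel c y'⟩, by rintro ⟨k, hk, rfl⟩; simpa⟩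
  rw [himage, infDist, ENNReal.ofReal_toReal (infEDist_ne_top hK)]
  nth_rw 1 [← sub_sub_cancel c y]
  exact infEDist_image hiso

section Linearization

open Asymptotics

variable {X Y : Type*} [NormedAddCommGroup X] [NormedSpace ℝ X]
  [NormedAddCommGroup Y] [NormedSpace ℝ Y] {g : X → Y} {L : X →L[ℝ] Y} {x₀ : X}

theorem HasFDerivAt.tendsto_infDist_div (hg : HasFDerivAt g L x₀) {K : Set Y} {h : X} {d : Y}
    (hT : L h - d ∈ tangentConeConv K (g x₀)) :
    Tendsto (fun t => infDist (g (x₀ + t • h) - t • d) K / t) (𝓝[>] 0) (𝓝 0) := by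
  have hline : HasDerivAt (fun t : ℝ => g (x₀ + t • h)) (L h) 0 := by
    have := ((hasDerivAt_id (0 : ℝ)).smul_const h).const_add x₀
    exact hg.comp_hasDerivAt_of_eq 0 (by simpa using this) (by simp)
  refine tendsto_infDist_div_of_tendsto_slope hT
    ((hline.tendsto_slope_zero_right.sub_const d).congr' ?_)
  filter_upwards [self_mem_nhdsWithin] with t (ht : 0 < t)
  rw [zero_add, zero_smul, add_zero, sub_right_comm, smul_sub _ (_ - _), inv_smul_smul₀ ht.ne']

theorem HasFDerivAt.eventually_infDist_lt (hg : HasFDerivAt g L x₀) {K : Set Y} {h : X} {d : Y}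
    (hT : L h - d ∈ tangentConeConv K (g x₀)) {y : Y} {κ : ℝ} (hy : ‖y - d‖ < κ) :
    ∀ᶠ t in 𝓝[>] (0 : ℝ), infDist (g (x₀ + t • h) - t • y) K < κ * t := by
  filter_upwards [(hg.tendsto_infDist_div hT).eventually (gt_mem_nhds (sub_pos.2 hy)),
    self_mem_nhdsWithin] with t ht (htpos : 0 < t)
  have hdist : dist (g (x₀ + t • h) - t • y) (g (x₀ + t • h) - t • d) = t * ‖y - d‖ := by
    rw [dist_sub_left, dist_eq_norm, ← smul_sub, norm_smul, Real.norm_of_nonneg htpos.le,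
      norm_sub_rev]
  rw [div_lt_iff₀ htpos] at ht
  linarith [infDist_le_infDist_add_dist (s := K) (x := g (x₀ + t • h) - t • y)
    (y := g (x₀ + t • h) - t • d)]

theorem HasFDerivAt.mem_closure_range_sub_hull (hg : HasFDerivAt g L x₀) {K : Set Y} {y : Y}
    {C : ℝ} (hfeas : ∀ᶠ t in 𝓝[>] (0 : ℝ), ∃ x, g x - t • y ∈ K ∧ ‖x - x₀‖ ≤ C * t) :
    y ∈ closure (range L - (ConvexCone.hull ℝ ((g x₀ + ·) ⁻¹' K) : Set Y)) := by
  obtain ⟨x, hx⟩ := hfeas.choice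
  have hxO : (fun t => x t - x₀) =O[𝓝[>] 0] (fun t : ℝ => t) := by
    refine IsBigO.of_bound C ?_
    filter_upwards [hx, self_mem_nhdsWithin] with t ht (htpos : 0 < t)
    rw [Real.norm_of_nonneg htpos.le]
    exact ht.2
  have hremainder : (fun t => g (x t) - g x₀ - L (x t - x₀)) =o[𝓝[>] 0] (fun t : ℝ => t) := by
    have hxlim : Tendsto x (𝓝[>] 0) (𝓝 x₀) := by
      simpa using hxO.trans_tendsto (tendsto_nhdsWithin_of_tendsto_nhds tendsto_id) |>.add_const x₀
    exact (hg.isLittleO.comp_tendsto hxlim).trans_isBigO hxO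
  refine mem_closure_of_tendsto (b := 𝓝[>] (0 : ℝ))
    (f := fun t => L (t⁻¹ • (x t - x₀)) - t⁻¹ • (g (x t) - t • y - g x₀)) ?_ ?_
  · have := hremainder.tendsto_inv_smul_nhds_zero.const_sub y
    rw [sub_zero] at this
    refine this.congr' ?_
    filter_upwards [self_mem_nhdsWithin] with t (ht : 0 < t)
    conv_lhs => rw [← inv_smul_smul₀ ht.ne' y]
    rw [map_smul, ← smul_sub, ← smul_sub]
    congr 1
    abel
  · filter_upwards [hx, self_mem_nhdsWithin] with t ht (htpos : 0 < t)
    refine sub_mem_sub (mem_range_self _) ((ConvexCone.hull ℝ _).smul_mem (inv_pos.2 htpos) ?_)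
    exact ConvexCone.subset_hull (by simpa using ht.1)

end Linearization

theorem DirHolderRegular.exists_eventually_near {X Y : Type*} [NormedAddCommGroup X]
    [NormedSpace ℝ X] [NormedAddCommGroup Y] [NormedSpace ℝ Y] {F : X → Set Y} {xbar : X}
    {ybar : Y} {u : X} {v : Y} {τ : ℝ} (hF : DirHolderRegular F xbar ybar u v 1 τ)
    (hτ : 0 ≤ τ) :
    ∃ ε > 0, ∃ η > 0, ∀ u' v', ‖u' - u‖ + ‖v' - v‖ < ε →
      (∀ᶠ t in 𝓝[>] (0 : ℝ), infEDist (ybar + t • v') (F (xbar + t • u'))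
        ≤ ENNReal.ofReal (η * (t * (‖u'‖ + ‖v'‖)))) →
      ∃ C, ∀ᶠ t in 𝓝[>] (0 : ℝ), ∃ x, ybar + t • v' ∈ F x ∧ ‖x - xbar‖ ≤ C * t := by
  obtain ⟨δ, hδ, ε, hε, η, hη, hF⟩ := hF
  refine ⟨ε, hε, η, hη, fun u' v' hdir hfeas => ⟨‖u'‖ + τ * η * (‖u'‖ + ‖v'‖) + 1, ?_⟩⟩
  set s := ‖u'‖ + ‖v'‖
  have hsmall : ∀ᶠ t in 𝓝[>] (0 : ℝ), t * s < δ := by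
    have : Tendsto (· * s) (𝓝[>] (0 : ℝ)) (𝓝 0) :=
      (zero_mul s ▸ (continuous_mul_const s).tendsto 0).mono_left nhdsWithin_le_nhds
    exact this.eventually (gt_mem_nhds hδ)
  filter_upwards [hfeas, hsmall, self_mem_nhdsWithin] with t hft hts (ht : 0 < t)
  have hnorm : ‖xbar + t • u' - xbar‖ + ‖ybar + t • v' - ybar‖ = t * s := by
    simp [s, norm_smul, abs_of_pos ht, mul_add]
  have hreg := hF (xbar + t • u') (ybar + t • v') (hnorm ▸ hts)
    ⟨t, ht.le, u', v', hdir, by simp⟩ (by rwa [hnorm, div_one, Real.rpow_one])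
  rw [ENNReal.rpow_one] at hreg
  have hlt : infEDist (xbar + t • u') {x | ybar + t • v' ∈ F x}
      < ENNReal.ofReal (τ * η * (t * s) + t) :=
    calc _ ≤ ENNReal.ofReal τ * ENNReal.ofReal (η * (t * s)) := hreg.trans (mul_le_mul_right hft _)
      _ = ENNReal.ofReal (τ * η * (t * s)) := by rw [← ENNReal.ofReal_mul hτ, mul_assoc]
      _ < _ := (ENNReal.ofReal_lt_ofReal_iff (by positivity)).2 (by linarith)
  obtain ⟨x, hx, hdist⟩ := infEDist_lt_iff.1 hlt
  refine ⟨x, hx, ?_⟩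
  rw [edist_lt_ofReal, dist_eq_norm'] at hdist
  have hshift : ‖xbar + t • u' - xbar‖ = t * ‖u'‖ := by simp [norm_smul, abs_of_pos ht]
  have := norm_sub_le_norm_sub_add_norm_sub x (xbar + t • u') xbar
  linarith

theorem robinson_cq_of_dirMetricRegular_general
    {X Y : Type*} [NormedAddCommGroup X] [NormedSpace ℝ X]
    [NormedAddCommGroup Y] [NormedSpace ℝ Y] [FiniteDimensional ℝ Y]
    (g : X → Y) (hg : ContDiff ℝ 1 g) (K : Set Y) (hKcv : Convex ℝ K)
    (x₀ : X) (hx₀ : g x₀ ∈ K) (d : Y) (hd : d ≠ 0) (h : X)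
    (hhd : fderiv ℝ g x₀ h - d ∈ tangentConeConv K (g x₀))
    (hreg : ∃ τ > (0:ℝ),
      DirHolderRegular (fun x : X => {y : Y | g x - y ∈ K}) x₀ 0 h d 1 τ) :
    d ∈ interior (Set.range (fderiv ℝ g x₀) - tangentConeConv K (g x₀)) := by
  obtain ⟨τ, hτ, hreg⟩ := hreg
  obtain ⟨ε, hε, η, hη, hnear⟩ := hreg.exists_eventually_near hτ.le
  set L := fderiv ℝ g x₀
  set R := (ConvexCone.hull ℝ ((g x₀ + ·) ⁻¹' K) : Set Y)
  have hL : HasFDerivAt g L x₀ := (hg.differentiable one_ne_zero x₀).hasFDerivAt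
  have hκ : 0 < η * ‖d‖ / 2 := by positivity
  have hclosure : ∀ᶠ y in 𝓝 d, y ∈ closure (range L - R) := by
    filter_upwards [ball_mem_nhds d (lt_min hε hκ),
      (continuous_norm.tendsto d).eventually (lt_mem_nhds (half_lt_self (norm_pos_iff.2 hd)))]
      with y hyd hy
    rw [mem_ball, dist_eq_norm, lt_min_iff] at hyd
    have hfeas : ∀ᶠ t in 𝓝[>] (0 : ℝ), infEDist ((0 : Y) + t • y) {y' | g (x₀ + t • h) - y' ∈ K}
        ≤ ENNReal.ofReal (η * (t * (‖h‖ + ‖y‖))) := by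
      filter_upwards [hL.eventually_infDist_lt hhd hyd.2, self_mem_nhdsWithin]
        with t ht (htpos : 0 < t)
      rw [zero_add, infEDist_setOf_sub_mem_s12 ⟨_, hx₀⟩]
      refine ENNReal.ofReal_le_ofReal (ht.le.trans ?_)
      linarith [mul_lt_mul_of_pos_left hy (mul_pos hη htpos),
        mul_nonneg (mul_nonneg hη.le htpos.le) (norm_nonneg h)]
    obtain ⟨C, hC⟩ := hnear h y (by simpa using hyd.1) hfeas
    exact hL.mem_closure_range_sub_hull (C := C) (by simpa using hC)
  have hconvex : Convex ℝ (range L - R) :=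
    (LinearMap.range (L : X →ₗ[ℝ] Y)).convex.sub (ConvexCone.hull ℝ _).convex
  exact interior_mono (sub_subset_sub_left (hull_preimage_add_subset_tangentConeConv hKcv hx₀))
    (hconvex.interior_closure_eq_interior ▸ mem_interior_iff_mem_nhds.2 hclosure)

/-- Lemma 4 of the paper: with `Y` finite dimensional, `x₀ ∈ Φ(0)`,
`d ≠ 0` and `Dg(x₀)h − d ∈ T_K(g(x₀))`, if `G = g − K` is directionally metrically
regular at `(x₀,0)` in direction `(h,d)`, then `d ∈ int (Dg(x₀)X − T_K(g(x₀)))`,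
i.e. Robinson's constraint qualification holds for the linearized problem. -/
theorem robinson_cq_of_dirMetricRegular
    {X Y : Type*} [NormedAddCommGroup X] [NormedSpace ℝ X] [CompleteSpace X]
    [NormedAddCommGroup Y] [NormedSpace ℝ Y] [FiniteDimensional ℝ Y]
    (g : X → Y) (hg : ContDiff ℝ 1 g) (K : Set Y) (hKcl : IsClosed K) (hKcv : Convex ℝ K)
    (x₀ : X) (hx₀ : g x₀ ∈ K) (d : Y) (hd : d ≠ 0) (h : X)
    (hhd : fderiv ℝ g x₀ h - d ∈ tangentConeConv K (g x₀))
    (hreg : ∃ τ > (0:ℝ),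
      DirHolderRegular (fun x : X => {y : Y | g x - y ∈ K}) x₀ 0 h d 1 τ) :
    d ∈ interior (Set.range (fderiv ℝ g x₀) - tangentConeConv K (g x₀)) :=
  robinson_cq_of_dirMetricRegular_general g hg K hKcv x₀ hx₀ d hd h hhd hreg

end
end
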